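/- arXiv:math/0306034 — 6 statements merged into one kernel-verified Lean document; each statement's English description precedes it below -/
import Mathlib

section
/- Let q : ℤ^m → ℚ be a quasipolynomial, and fix integers a_1, …, a_m, c_0, …, c_m, and d ≠ 0. Then the function Q_1 : ℤ^{m+1} → ℚ defined by Q_1(t_0, t_1, …, t_m) = Σ_{k=1}^{⌊(c_0 t_0 + ⋯ + c_m t_m − 1)/d⌋} q(t_1 + a_1 k, …, t_m + a_m k), where the sum is taken with the signed convention, is a quasipolynomial on ℤ^{m+1}. -/
/-- A function `Q : ℤ^d → ℚ` is a quasipolynomial if there are a positive integer `p`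
and polynomials `q_r ∈ ℚ[x₁,…,x_d]`, indexed by residue vectors `r ∈ (ℤ/p)^d`, with
`Q t = q_{t mod p}(t)` for all `t ∈ ℤ^d`. -/
def IsQuasiPolynomial {d : ℕ} (Q : (Fin d → ℤ) → ℚ) : Prop :=
  ∃ p : ℕ, 0 < p ∧ ∃ q : (Fin d → ZMod p) → MvPolynomial (Fin d) ℚ,
    ∀ t : Fin d → ℤ, Q t = MvPolynomial.eval (fun i => (t i : ℚ)) (q fun i => (t i : ZMod p))

/-- The signed convention for a finite sum `∑_{k=a}^{b} f(k)` over integers: the ordinary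
sum if `a ≤ b`, the value `0` if `a = b + 1`, and `-∑_{k=b+1}^{a-1} f(k)` if `a ≥ b + 2`. -/
noncomputable def signedSum (a b : ℤ) (f : ℤ → ℚ) : ℚ :=
  if a ≤ b then ∑ k ∈ Finset.Icc a b, f k else -∑ k ∈ Finset.Icc (b + 1) (a - 1), f k

/-!
With the signed convention, `N ↦ ∑_{k=1}^{N} g k` is the unique function on `ℤ` that vanishes
at `0` and has backward difference `g`. If `g` is a quasipolynomial of period `p` (in `k` and in
parameters `u`), such a function is built as follows: on each residue class `g` is a polynomial,
so `Ψ k - Ψ (k - p) = g k` has a polynomial solution on every class (Bernoulli polynomials), and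
the window sum `T k = ∑_{j<p} Ψ (k - j)` has backward difference `Ψ k - Ψ (k - p) = g k`.

Quasipolynomials of period `p` may be evaluated at integer quasipolynomials of period `P` whose
residues modulo `p` also have period `P`. The upper limit `⌊(ℓ t - 1) / d⌋`, with `ℓ` linear, is
such a substitution for `P = p |d|`: shifting `ℓ` by a multiple of `p |d|` shifts the quotient by
a multiple of `p`.
-/

theorem signedSum_one_eq_add (f : ℤ → ℚ) (N : ℤ) :
    signedSum 1 N f = signedSum 1 (N - 1) f + f N := by
  unfold signedSum
  rcases lt_trichotomy N 1 with h | rfl | h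
  · rw [if_neg (by omega), if_neg (by omega), sub_add_cancel,
      ← Finset.insert_Icc_add_one_left_eq_Icc (by omega : N ≤ 1 - 1), Finset.sum_insert (by simp)]
    ring
  · simp
  · rw [if_pos h.le, if_pos (by omega), ← Finset.insert_Icc_sub_one_right_eq_Icc h.le,
      Finset.sum_insert (by simp)]
    ring

theorem signedSum_one_eq_sub (f : ℤ → ℚ) {F : ℤ → ℚ} (hF : ∀ N, F N - F (N - 1) = f N)
    (N : ℤ) : signedSum 1 N f = F N - F 0 := by
  have hstep (N : ℤ) : signedSum 1 N f - (F N - F 0) =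
      signedSum 1 (N - 1) f - (F (N - 1) - F 0) := by
    rw [signedSum_one_eq_add, ← hF N]
    ring
  suffices signedSum 1 N f - (F N - F 0) = 0 by linarith
  induction N using Int.induction_on with
  | zero => simp [signedSum]
  | succ n ih => rwa [hstep, add_sub_cancel_right]
  | pred n ih => rw [← ih, hstep (-n)]

theorem exists_floor_sub_div_eq_add_of_modEq {x y : ℤ} (e : ℚ) {d : ℤ} (hd : d ≠ 0) {p : ℕ}
    (h : x ≡ y [ZMOD (p * d.natAbs : ℕ)]) :
    ∃ w : ℤ, (x : ℚ) = y + d * (p * w) ∧ ⌊((x : ℚ) - e) / d⌋ = ⌊((y : ℚ) - e) / d⌋ + p * w := by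
  obtain ⟨v, hv⟩ := h.symm.dvd
  have hxy : x = y + d * (p * (d.sign * v)) := by
    rw [Nat.cast_mul, ← Int.mul_sign_self] at hv
    linear_combination hv
  refine ⟨d.sign * v, by exact_mod_cast hxy, ?_⟩
  have hshift : ((x : ℚ) - e) / d = ((y : ℚ) - e) / d + ((p * (d.sign * v) : ℤ) : ℚ) := by
    rw [hxy]
    push_cast
    field_simp
    ring
  rw [hshift, Int.floor_add_intCast]

open Polynomial in
theorem Polynomial.exists_sub_comp_X_sub_C_eq_X_pow {c : ℚ} (hc : c ≠ 0) (n : ℕ) :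
    ∃ ψ : ℚ[X], ψ - ψ.comp (X - C c) = X ^ n := by
  refine ⟨C (c ^ n / (n + 1)) * (bernoulli (n + 1)).comp (C c⁻¹ * X + 1), funext fun x => ?_⟩
  have hB := bernoulli_eval_one_add (n + 1) (c⁻¹ * x)
  have hshift : c⁻¹ * (x - c) + 1 = c⁻¹ * x := by field_simp; ring
  simp only [eval_sub, eval_mul, eval_comp, eval_C, eval_X, eval_add, eval_one, eval_pow, hshift,
    add_comm _ (1 : ℚ), hB, Nat.add_sub_cancel, mul_pow, inv_pow]
  field_simp
  push_cast
  ring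

open Polynomial in
theorem Polynomial.exists_sub_comp_X_sub_C_eq {R : Type*} [CommRing R] [Algebra ℚ R] {c : ℚ}
    (hc : c ≠ 0) (f : R[X]) : ∃ Ψ : R[X], Ψ - Ψ.comp (X - C (algebraMap ℚ R c)) = f := by
  choose ψ hψ using exists_sub_comp_X_sub_C_eq_X_pow hc
  refine ⟨∑ i ∈ Finset.range (f.natDegree + 1), C (f.coeff i) * (ψ i).map (algebraMap ℚ R), ?_⟩
  conv_rhs => rw [f.as_sum_range_C_mul_X_pow]
  rw [sum_comp, ← Finset.sum_sub_distrib]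
  refine Finset.sum_congr rfl fun i _ => ?_
  rw [mul_comp, C_comp, ← mul_sub, ← map_X (algebraMap ℚ R), ← map_C, ← Polynomial.map_sub,
    ← map_comp, ← Polynomial.map_sub, hψ, Polynomial.map_pow, map_X]

theorem MvPolynomial.exists_eval_cons_sub_eval_cons_sub_eq {m : ℕ} {c : ℚ} (hc : c ≠ 0)
    (P : MvPolynomial (Fin (m + 1)) ℚ) :
    ∃ A : MvPolynomial (Fin (m + 1)) ℚ, ∀ (y : ℚ) (s : Fin m → ℚ),
      eval (Fin.cons y s) A - eval (Fin.cons (y - c) s) A = eval (Fin.cons y s) P := by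
  obtain ⟨Ψ, hΨ⟩ := Polynomial.exists_sub_comp_X_sub_C_eq hc (finSuccEquiv ℚ m P)
  refine ⟨(finSuccEquiv ℚ m).symm Ψ, fun y s => ?_⟩
  simp only [eval_eq_eval_mv_eval', AlgEquiv.apply_symm_apply, ← hΨ, Polynomial.map_sub,
    Polynomial.eval_sub, Polynomial.map_comp, Polynomial.eval_comp]
  simp

open MvPolynomial

variable {n k m : ℕ}

def IsQuasiPolynomialWithPeriod (p : ℕ) (Q : (Fin n → ℤ) → ℚ) : Prop :=
  ∃ q : (Fin n → ZMod p) → MvPolynomial (Fin n) ℚ,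
    ∀ t : Fin n → ℤ, Q t = eval (fun i => (t i : ℚ)) (q fun i => (t i : ZMod p))

theorem isQuasiPolynomial_iff {Q : (Fin n → ℤ) → ℚ} :
    IsQuasiPolynomial Q ↔ ∃ p, 0 < p ∧ IsQuasiPolynomialWithPeriod p Q :=
  Iff.rfl

/-- Integer-valued quasipolynomials of period `P` that can be substituted into quasipolynomials
of period `p`: this needs their residues modulo `p` to have period `P` as well. -/
structure IsIntQuasiPolynomial (P p : ℕ) (f : (Fin n → ℤ) → ℤ) : Prop where
  withPeriod : IsQuasiPolynomialWithPeriod P fun t => (f t : ℚ)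
  mod_factors : ∃ ρ : (Fin n → ZMod P) → ZMod p, ∀ t, (f t : ZMod p) = ρ fun i => (t i : ZMod P)

namespace IsQuasiPolynomialWithPeriod

variable {p : ℕ} {Q R : (Fin n → ℤ) → ℚ}

theorem const (a : ℚ) : IsQuasiPolynomialWithPeriod p fun _ : Fin n → ℤ => a :=
  ⟨fun _ => C a, fun _ => by simp⟩

theorem add (hQ : IsQuasiPolynomialWithPeriod p Q) (hR : IsQuasiPolynomialWithPeriod p R) :
    IsQuasiPolynomialWithPeriod p fun t => Q t + R t := by
  obtain ⟨q, hq⟩ := hQ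
  obtain ⟨r, hr⟩ := hR
  exact ⟨q + r, fun t => by simp [hq, hr]⟩

theorem sub (hQ : IsQuasiPolynomialWithPeriod p Q) (hR : IsQuasiPolynomialWithPeriod p R) :
    IsQuasiPolynomialWithPeriod p fun t => Q t - R t := by
  obtain ⟨q, hq⟩ := hQ
  obtain ⟨r, hr⟩ := hR
  exact ⟨q - r, fun t => by simp [hq, hr]⟩

theorem mul (hQ : IsQuasiPolynomialWithPeriod p Q) (hR : IsQuasiPolynomialWithPeriod p R) :
    IsQuasiPolynomialWithPeriod p fun t => Q t * R t := by
  obtain ⟨q, hq⟩ := hQ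
  obtain ⟨r, hr⟩ := hR
  exact ⟨q * r, fun t => by simp [hq, hr]⟩

theorem sum {ι : Type*} (s : Finset ι) {Q : ι → (Fin n → ℤ) → ℚ}
    (hQ : ∀ j, IsQuasiPolynomialWithPeriod p (Q j)) :
    IsQuasiPolynomialWithPeriod p fun t => ∑ j ∈ s, Q j t := by
  choose q hq using hQ
  exact ⟨fun r => ∑ j ∈ s, q j r, fun t => by simp [hq]⟩

end IsQuasiPolynomialWithPeriod

namespace IsIntQuasiPolynomial

variable {p P : ℕ} {f g : (Fin n → ℤ) → ℤ}

theorem const (b : ℤ) : IsIntQuasiPolynomial P p fun _ : Fin n → ℤ => b :=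
  ⟨.const _, fun _ => b, fun _ => rfl⟩

theorem apply (hpP : p ∣ P) (i : Fin n) : IsIntQuasiPolynomial P p fun t => t i :=
  ⟨⟨fun _ => X i, fun t => by simp⟩, fun r => ZMod.castHom hpP (ZMod p) (r i),
    fun t => by simp⟩

theorem add (hf : IsIntQuasiPolynomial P p f) (hg : IsIntQuasiPolynomial P p g) :
    IsIntQuasiPolynomial P p fun t => f t + g t := by
  obtain ⟨ρ, hρ⟩ := hf.mod_factors
  obtain ⟨σ, hσ⟩ := hg.mod_factors
  exact ⟨by simpa using hf.withPeriod.add hg.withPeriod, ρ + σ, fun t => by simp [hρ, hσ]⟩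

theorem sub (hf : IsIntQuasiPolynomial P p f) (hg : IsIntQuasiPolynomial P p g) :
    IsIntQuasiPolynomial P p fun t => f t - g t := by
  obtain ⟨ρ, hρ⟩ := hf.mod_factors
  obtain ⟨σ, hσ⟩ := hg.mod_factors
  exact ⟨by simpa using hf.withPeriod.sub hg.withPeriod, ρ - σ, fun t => by simp [hρ, hσ]⟩

theorem mul (hf : IsIntQuasiPolynomial P p f) (hg : IsIntQuasiPolynomial P p g) :
    IsIntQuasiPolynomial P p fun t => f t * g t := by
  obtain ⟨ρ, hρ⟩ := hf.mod_factors
  obtain ⟨σ, hσ⟩ := hg.mod_factors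
  exact ⟨by simpa using hf.withPeriod.mul hg.withPeriod, ρ * σ, fun t => by simp [hρ, hσ]⟩

theorem sum {ι : Type*} (s : Finset ι) {f : ι → (Fin n → ℤ) → ℤ}
    (hf : ∀ j, IsIntQuasiPolynomial P p (f j)) :
    IsIntQuasiPolynomial P p fun t => ∑ j ∈ s, f j t := by
  choose ρ hρ using fun j => (hf j).mod_factors
  exact ⟨by simpa using IsQuasiPolynomialWithPeriod.sum s fun j => (hf j).withPeriod,
    fun r => ∑ j ∈ s, ρ j r, fun t => by simp [hρ]⟩

theorem floor_sub_div [NeZero P] {d : ℤ} (hd : d ≠ 0)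
    {ℓ : (Fin n → ℤ) → ℤ} (hℓ : IsIntQuasiPolynomial P (p * d.natAbs) ℓ) (e : ℚ) :
    IsIntQuasiPolynomial P p fun t => ⌊((ℓ t : ℚ) - e) / d⌋ := by
  obtain ⟨Φ, hΦ⟩ := hℓ.withPeriod
  obtain ⟨ρ, hρ⟩ := hℓ.mod_factors
  let rep : (Fin n → ZMod P) → Fin n → ℤ := fun r i => (r i).val
  have hrep (t : Fin n → ℤ) : ∃ w : ℤ, (ℓ t : ℚ) = ℓ (rep fun i => t i) + d * (p * w) ∧
      ⌊((ℓ t : ℚ) - e) / d⌋ = ⌊((ℓ (rep fun i => t i) : ℚ) - e) / d⌋ + p * w :=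
    exists_floor_sub_div_eq_add_of_modEq e hd <| (ZMod.intCast_eq_intCast_iff _ _ _).1 <| by
      rw [hρ, hρ]
      simp [rep]
  refine ⟨⟨fun r => C ((⌊((ℓ (rep r) : ℚ) - e) / d⌋ : ℚ) - ℓ (rep r) / d) + C (d : ℚ)⁻¹ * Φ r,
    fun t => ?_⟩, fun r => (⌊((ℓ (rep r) : ℚ) - e) / d⌋ : ZMod p), fun t => ?_⟩
  · obtain ⟨w, hℓt, hfloor⟩ := hrep t
    have hΦt := hΦ t
    dsimp only at hΦt ⊢
    rw [map_add, map_mul, eval_C, eval_C, ← hΦt, hfloor, hℓt]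
    push_cast
    field_simp
    ring
  · obtain ⟨w, -, hfloor⟩ := hrep t
    simp [hfloor]

end IsIntQuasiPolynomial

namespace IsQuasiPolynomialWithPeriod

variable {p P : ℕ}

theorem comp {F : (Fin k → ℤ) → ℚ} (hF : IsQuasiPolynomialWithPeriod p F)
    {φ : (Fin n → ℤ) → Fin k → ℤ} (hφ : ∀ j, IsIntQuasiPolynomial P p fun t => φ t j) :
    IsQuasiPolynomialWithPeriod P fun t => F (φ t) := by
  obtain ⟨q, hq⟩ := hF
  choose Φ hΦ using fun j => (hφ j).withPeriod
  choose ρ hρ using fun j => (hφ j).mod_factors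
  refine ⟨fun r => bind₁ (fun j => Φ j r) (q fun j => ρ j r), fun t => ?_⟩
  simp only [hq, ← hρ, hΦ]
  exact (eval₂Hom_bind₁ _ _ _ _).symm

theorem comp_cons {F : (Fin (k + 1) → ℤ) → ℚ} (hF : IsQuasiPolynomialWithPeriod p F)
    (hpP : p ∣ P) {f : (Fin (k + 1) → ℤ) → ℤ} (hf : IsIntQuasiPolynomial P p f) :
    IsQuasiPolynomialWithPeriod P fun x => F (Fin.cons (f x) (Fin.tail x)) :=
  hF.comp fun j => by
    cases j using Fin.cases with
    | zero => simpa using hf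
    | succ i => simpa [Fin.tail] using IsIntQuasiPolynomial.apply hpP i.succ

theorem exists_sub_eq (hp : p ≠ 0)
    {g : (Fin (m + 1) → ℤ) → ℚ} (hg : IsQuasiPolynomialWithPeriod p g) :
    ∃ Ψ, IsQuasiPolynomialWithPeriod p Ψ ∧
      ∀ (k : ℤ) (u : Fin m → ℤ), Ψ (Fin.cons k u) - Ψ (Fin.cons (k - p) u) = g (Fin.cons k u) := by
  obtain ⟨q, hq⟩ := hg
  choose A hA using fun r =>
    exists_eval_cons_sub_eval_cons_sub_eq (c := p) (Nat.cast_ne_zero.2 hp) (q r)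
  refine ⟨fun t => eval (fun i => (t i : ℚ)) (A fun i => (t i : ZMod p)), ⟨A, fun _ => rfl⟩,
    fun k u => ?_⟩
  have hres : (fun i => ((Fin.cons (k - p) u : Fin (m + 1) → ℤ) i : ZMod p)) =
      fun i => ((Fin.cons k u : Fin (m + 1) → ℤ) i : ZMod p) := by
    refine funext (Fin.cases ?_ fun i => ?_) <;> simp
  have hcast (y : ℤ) : (fun i => ((Fin.cons y u : Fin (m + 1) → ℤ) i : ℚ)) =
      Fin.cons (y : ℚ) fun i => (u i : ℚ) :=
    Fin.comp_cons _ _ _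
  simp only [hres, hcast, hq]
  push_cast
  exact hA _ _ _

theorem signedSum_one (hp : p ≠ 0)
    {g : (Fin (m + 1) → ℤ) → ℚ} (hg : IsQuasiPolynomialWithPeriod p g) :
    IsQuasiPolynomialWithPeriod p fun x =>
      signedSum 1 (x 0) fun k => g (Fin.cons k (Fin.tail x)) := by
  obtain ⟨Ψ, hΨ, hΨg⟩ := hg.exists_sub_eq hp
  set T : (Fin (m + 1) → ℤ) → ℚ := fun x =>
    ∑ j ∈ Finset.range p, Ψ (Fin.cons (x 0 - j) (Fin.tail x))
  have hT : IsQuasiPolynomialWithPeriod p T := .sum _ fun j =>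
    hΨ.comp_cons dvd_rfl ((IsIntQuasiPolynomial.apply dvd_rfl 0).sub (.const j))
  have hTg (k : ℤ) (u : Fin m → ℤ) :
      T (Fin.cons k u) - T (Fin.cons (k - 1) u) = g (Fin.cons k u) := by
    have hwindow := Finset.sum_range_sub' (fun j : ℕ => Ψ (Fin.cons (k - j) u)) p
    rw [Nat.cast_zero, sub_zero, hΨg] at hwindow
    simpa [T, ← Finset.sum_sub_distrib, sub_sub, add_comm (1 : ℤ)] using hwindow
  have hS : (fun x => signedSum 1 (x 0) fun k => g (Fin.cons k (Fin.tail x))) =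
      fun x => T x - T (Fin.cons 0 (Fin.tail x)) := by
    funext x
    rw [signedSum_one_eq_sub _ (F := fun k => T (Fin.cons k (Fin.tail x))) fun N => hTg N _,
      Fin.cons_self_tail]
  rw [hS]
  exact hT.sub (hT.comp_cons dvd_rfl (.const 0))

end IsQuasiPolynomialWithPeriod

/-- **Lemma on quasipolynomials, first sum.**  If `q : ℤ^m → ℚ` is a quasipolynomial and
`a₁,…,a_m, c₀,…,c_m, d` are integers with `d ≠ 0`, then
`Q₁(t₀,…,t_m) = ∑_{k=1}^{⌊(c₀t₀+⋯+c_mt_m-1)/d⌋} q(t₁+a₁k, …, t_m+a_mk)`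
(signed-sum convention) is a quasipolynomial on `ℤ^{m+1}`. -/
theorem quasipolynomial_signed_sum_one
    (m : ℕ) (q : (Fin m → ℤ) → ℚ) (hq : IsQuasiPolynomial q)
    (a : Fin m → ℤ) (c : Fin (m + 1) → ℤ) (d : ℤ) (hd : d ≠ 0) :
    IsQuasiPolynomial (fun t : Fin (m + 1) → ℤ =>
      signedSum 1 ⌊((∑ i, c i * t i : ℤ) - 1 : ℚ) / (d : ℚ)⌋
        (fun k => q fun i => t i.succ + a i * k)) := by
  obtain ⟨p, hp, hq⟩ := isQuasiPolynomial_iff.1 hq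
  have hg : IsQuasiPolynomialWithPeriod p fun x : Fin (m + 1) → ℤ =>
      q fun i => x i.succ + a i * x 0 :=
    hq.comp fun i =>
      (IsIntQuasiPolynomial.apply dvd_rfl i.succ).add
        ((IsIntQuasiPolynomial.const (a i)).mul (.apply dvd_rfl 0))
  have hP : p * d.natAbs ≠ 0 := mul_ne_zero hp.ne' (Int.natAbs_ne_zero.2 hd)
  have : NeZero (p * d.natAbs) := ⟨hP⟩
  have hN : IsIntQuasiPolynomial (p * d.natAbs) p fun t : Fin (m + 1) → ℤ =>
      ⌊((∑ i, c i * t i : ℤ) - 1 : ℚ) / d⌋ :=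
    .floor_sub_div hd (.sum _ fun i => (IsIntQuasiPolynomial.const (c i)).mul (.apply dvd_rfl i)) 1
  refine isQuasiPolynomial_iff.2 ⟨p * d.natAbs, Nat.pos_of_ne_zero hP, ?_⟩
  simpa [Fin.tail] using (hg.signedSum_one hp.ne').comp_cons (dvd_mul_right p _) hN
end

section
/- Let q : ℤ^m → ℚ be a quasipolynomial, and fix integers a_1, …, a_m, c_0, …, c_m, and d ≠ 0. Then the function Q_2 : ℤ^{m+1} → ℚ defined by Q_2(t_0, t_1, …, t_m) = Σ_{k=0}^{⌊(c_0 t_0 + ⋯ + c_m t_m)/d⌋} q(t_1 + a_1 k, …, t_m + a_m k), where the sum is taken with the signed convention, is a quasipolynomial on ℤ^{m+1}. -/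
namespace MvPolynomial

theorem eval_bind₁ {R σ τ : Type*} [CommSemiring R] (x : τ → R)
    (h : σ → MvPolynomial τ R) (g : MvPolynomial σ R) :
    eval x (bind₁ h g) = eval (fun i => eval x (h i)) g :=
  aeval_bind₁ x h g

theorem intCast_eval {R σ : Type*} [CommRing R] (u : σ → ℤ) (s : MvPolynomial σ ℤ) :
    ((eval u s : ℤ) : R) = eval (fun j => (u j : R)) (map (Int.castRingHom R) s) := by
  rw [eval_map]
  exact eval₂_comp_left (Int.castRingHom R) (RingHom.id _) u s

end MvPolynomial

theorem Int.sub_one_ediv (x : ℤ) {p : ℤ} (hp : 0 < p) :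
    (x - 1) / p = x / p - if p ∣ x then 1 else 0 := by
  have hx := Int.mul_ediv_add_emod x p
  have h0 := Int.emod_nonneg x hp.ne'
  have h1 := Int.emod_lt_of_pos x hp
  split_ifs with h <;> rw [Int.dvd_iff_emod_eq_zero] at h
  · exact ((Int.ediv_emod_unique (r := p - 1) hp).2
      ⟨by rw [mul_sub]; linarith, by omega, by omega⟩).1
  · exact ((Int.ediv_emod_unique (r := x % p - 1) hp).2 ⟨by linarith, by omega, by omega⟩).1

theorem floor_intCast_add_mul_div {d : ℤ} (hd : d ≠ 0) (x y : ℤ) :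
    ⌊((x + d * y : ℤ) : ℚ) / d⌋ = ⌊(x : ℚ) / d⌋ + y := by
  rw [← Int.floor_add_intCast]
  congr 1
  push_cast
  field_simp

theorem signedSum_zero_neg_one (f : ℤ → ℚ) : signedSum 0 (-1) f = 0 := by
  simp [signedSum]

theorem signedSum_zero_sub_signedSum_zero_sub_one (N : ℤ) (f : ℤ → ℚ) :
    signedSum 0 N f - signedSum 0 (N - 1) f = f N := by
  unfold signedSum
  rcases lt_trichotomy N 0 with hN | rfl | hN
  · rw [if_neg (by omega), if_neg (by omega), sub_add_cancel,
      ← Finset.insert_Icc_add_one_left_eq_Icc (by omega : N ≤ 0 - 1),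
      Finset.sum_insert (by simp)]
    ring
  · simp
  · rw [if_pos hN.le, if_pos (by omega), ← Finset.insert_Icc_sub_one_right_eq_Icc hN.le,
      Finset.sum_insert (by simp)]
    ring

theorem signedSum_zero_eq_of_sub_eq {f G : ℤ → ℚ} (h₀ : G (-1) = 0)
    (hG : ∀ N, G N - G (N - 1) = f N) (N : ℤ) : signedSum 0 N f = G N := by
  induction N using Int.inductionOn' (b := -1) with
  | zero => rw [h₀, signedSum_zero_neg_one]
  | succ k _ ih =>
    have h₁ := signedSum_zero_sub_signedSum_zero_sub_one (k + 1) f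
    have h₂ := hG (k + 1)
    rw [add_sub_cancel_right] at h₁ h₂
    linarith
  | pred k _ ih =>
    linarith [signedSum_zero_sub_signedSum_zero_sub_one k f, hG k]

theorem signedSum_zero_ediv_sub_signedSum_zero_sub_one_ediv {p : ℤ} (hp : 0 < p) (x : ℤ)
    (f : ℤ → ℚ) :
    signedSum 0 (x / p) f - signedSum 0 ((x - 1) / p) f = if p ∣ x then f (x / p) else 0 := by
  rw [Int.sub_one_ediv x hp]
  split_ifs
  · exact signedSum_zero_sub_signedSum_zero_sub_one _ f
  · rw [sub_zero, sub_self]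

theorem signedSum_zero_eq_sum_residues {p : ℕ} (hp : 0 < p) (f : ℤ → ℚ) (N : ℤ) :
    signedSum 0 N f =
      ∑ r ∈ Finset.range p, signedSum 0 ((N - r) / p) fun j => f (r + p * j) := by
  have hp' : (0 : ℤ) < p := by exact_mod_cast hp
  refine signedSum_zero_eq_of_sub_eq (G := fun N =>
    ∑ r ∈ Finset.range p, signedSum 0 ((N - r) / p) fun j => f (r + p * j)) ?_ (fun N => ?_) N
  · refine Finset.sum_eq_zero fun r hr => ?_
    have hr : (r : ℤ) < p := by exact_mod_cast Finset.mem_range.1 hr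
    rw [show (-1 - r : ℤ) / p = -1 from ((Int.ediv_emod_unique (r := p - 1 - r) hp').2
      ⟨by ring, by omega, by omega⟩).1, signedSum_zero_neg_one]
  · have hN₀ := Int.emod_nonneg N hp'.ne'
    have hN₁ := Int.emod_lt_of_pos N hp'
    have hres : ∀ r ∈ Finset.range p, (p : ℤ) ∣ N - r ↔ r = (N % p).toNat := by
      intro r hr
      have hr : (r : ℤ) < p := by exact_mod_cast Finset.mem_range.1 hr
      rw [Int.dvd_iff_emod_eq_zero, ← Int.emod_eq_emod_iff_emod_sub_eq_zero,
        Int.emod_eq_of_lt (by omega) hr]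
      omega
    have hterm : ∀ r ∈ Finset.range p,
        ((signedSum 0 ((N - r) / p) fun j => f (r + p * j)) -
          signedSum 0 ((N - 1 - r) / p) fun j => f (r + p * j)) =
            if r = (N % p).toNat then f N else 0 := by
      intro r hr
      rw [sub_right_comm, signedSum_zero_ediv_sub_signedSum_zero_sub_one_ediv hp']
      by_cases h : (p : ℤ) ∣ N - r
      · rw [if_pos h, if_pos ((hres r hr).1 h), Int.mul_ediv_cancel' h, add_sub_cancel]
      · rw [if_neg h, if_neg (mt (hres r hr).2 h)]
    rw [← Finset.sum_sub_distrib, Finset.sum_congr rfl hterm, Finset.sum_ite_eq',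
      if_pos (Finset.mem_range.2 (by omega))]

theorem signedSum_add (a b : ℤ) (f g : ℤ → ℚ) :
    signedSum a b (fun k => f k + g k) = signedSum a b f + signedSum a b g := by
  unfold signedSum
  split_ifs <;> simp only [Finset.sum_add_distrib, neg_add]

theorem signedSum_const_mul (a b : ℤ) (c : ℚ) (f : ℤ → ℚ) :
    signedSum a b (fun k => c * f k) = c * signedSum a b f := by
  unfold signedSum
  split_ifs <;> simp only [Finset.mul_sum, mul_neg]

open Polynomial in
theorem exists_signedSum_pow_eq_eval (e : ℕ) :
    ∃ A : ℚ[X], ∀ N : ℤ, signedSum 0 N (fun j => (j : ℚ) ^ e) = A.eval (N : ℚ) := by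
  let B := Polynomial.bernoulli (e + 1)
  let A : ℚ[X] := C ((e + 1 : ℚ)⁻¹) * (B.comp (X + 1) - C (B.eval 0))
  refine ⟨A, signedSum_zero_eq_of_sub_eq (G := fun N : ℤ => A.eval (N : ℚ)) ?_ fun N => ?_⟩
  · simp [A]
  · have hB := bernoulli_eval_one_add (e + 1) N
    rw [add_comm, Nat.add_sub_cancel] at hB
    simp only [A, B, eval_mul, eval_C, eval_sub, eval_comp, eval_add, eval_X, eval_one,
      Int.cast_sub, Int.cast_one, sub_add_cancel, hB]
    field_simp
    push_cast
    ring

open MvPolynomial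

theorem exists_signedSum_eval_eq {m : ℕ} (P : MvPolynomial (Fin (m + 1)) ℚ) :
    ∃ F : MvPolynomial (Fin (m + 1)) ℚ, ∀ (N : ℤ) (w : Fin m → ℤ),
      signedSum 0 N (fun j => eval (fun i => ((Fin.cons j w : Fin (m + 1) → ℤ) i : ℚ)) P) =
        eval (fun i => ((Fin.cons N w : Fin (m + 1) → ℤ) i : ℚ)) F := by
  induction P using MvPolynomial.induction_on' with
  | monomial u a =>
    obtain ⟨A, hA⟩ := exists_signedSum_pow_eq_eval (u 0)
    refine ⟨Polynomial.aeval (X 0) A * (C a * ∏ i : Fin m, X i.succ ^ u i.succ),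
      fun N w => ?_⟩
    have hmon : ∀ x : ℤ,
        eval (fun i => ((Fin.cons x w : Fin (m + 1) → ℤ) i : ℚ)) (monomial u a) =
          (a * ∏ i : Fin m, (w i : ℚ) ^ u i.succ) * (x : ℚ) ^ u 0 := by
      intro x
      rw [eval_monomial, Finsupp.prod_fintype _ _ (by simp), Fin.prod_univ_succ]
      simp only [Fin.cons_zero, Fin.cons_succ]
      ring
    have hA0 : ∀ x : Fin (m + 1) → ℚ, eval x (Polynomial.aeval (X 0) A) = A.eval (x 0) := by
      intro x
      have h := Polynomial.aeval_algHom_apply (aeval x) (X 0 : MvPolynomial (Fin (m + 1)) ℚ) A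
      simp only [aeval_X, Polynomial.coe_aeval_eq_eval] at h
      exact h.symm
    simp only [hmon, signedSum_const_mul, hA, map_mul, hA0, eval_C, map_prod, map_pow, eval_X,
      Fin.cons_succ, Fin.cons_zero]
    ring
  | add P Q hP hQ =>
    obtain ⟨F, hF⟩ := hP
    obtain ⟨G, hG⟩ := hQ
    exact ⟨F + G, fun N w => by simp only [map_add, signedSum_add, hF, hG]⟩

def IsPolynomialOnCosets {n : ℕ} (D : ℤ) (Q : (Fin n → ℤ) → ℚ) : Prop :=
  ∀ τ : Fin n → ℤ, ∃ g : MvPolynomial (Fin n) ℚ, ∀ u : Fin n → ℤ,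
    Q (τ + D • u) = eval (fun i => (u i : ℚ)) g

section

variable {n : ℕ} {Q : (Fin n → ℤ) → ℚ}

theorem IsQuasiPolynomial.exists_isPolynomialOnCosets (h : IsQuasiPolynomial Q) :
    ∃ p : ℕ, 0 < p ∧ IsPolynomialOnCosets p Q := by
  obtain ⟨p, hp, q, hq⟩ := h
  refine ⟨p, hp, fun τ =>
    ⟨bind₁ (fun i => C (τ i : ℚ) + C (p : ℚ) * X i) (q fun i => τ i), fun u => ?_⟩⟩
  have hres : (fun i => ((τ + (p : ℤ) • u) i : ZMod p)) = fun i => (τ i : ZMod p) := by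
    funext i
    simp
  rw [hq, hres, eval_bind₁]
  congr
  funext i
  simp

theorem IsPolynomialOnCosets.isQuasiPolynomial {D : ℤ} (hD : D ≠ 0)
    (h : IsPolynomialOnCosets D Q) : IsQuasiPolynomial Q := by
  choose g hg using h
  refine ⟨D.natAbs, Int.natAbs_pos.2 hD,
    fun r => bind₁ (fun i => C (D : ℚ)⁻¹ * (X i - C ((r i).val : ℚ)))
      (g fun i => (r i).val), fun t => ?_⟩
  have : NeZero D.natAbs := ⟨Int.natAbs_ne_zero.2 hD⟩
  set τ : Fin n → ℤ := fun i => ((t i : ZMod D.natAbs).val : ℤ)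
  have hdvd : ∀ i, D ∣ t i - τ i := by
    intro i
    rw [← Int.natAbs_dvd, ← ZMod.intCast_zmod_eq_zero_iff_dvd]
    simp [τ]
  obtain ⟨u, hu⟩ : ∃ u : Fin n → ℤ, t = τ + D • u :=
    ⟨fun i => (t i - τ i) / D, funext fun i => by simp [Int.mul_ediv_cancel' (hdvd i)]⟩
  conv_lhs => rw [hu]
  rw [hg, eval_bind₁]
  congr
  funext i
  have hD' : (D : ℚ) ≠ 0 := by exact_mod_cast hD
  have hui : (t i : ℚ) = τ i + D * u i := by simp [hu]
  simp only [eval_mul, eval_C, eval_sub, eval_X, hui, τ, Int.cast_natCast]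
  field_simp
  ring

end

theorem IsPolynomialOnCosets.comp {n m : ℕ} {p D : ℤ} {Q : (Fin m → ℤ) → ℚ}
    (hQ : IsPolynomialOnCosets p Q) {φ : (Fin n → ℤ) → Fin m → ℤ}
    (s : Fin m → MvPolynomial (Fin n) ℤ)
    (hφ : ∀ θ u, φ (θ + D • u) = φ θ + p • fun i => eval u (s i)) :
    IsPolynomialOnCosets D fun t => Q (φ t) := by
  intro θ
  obtain ⟨g, hg⟩ := hQ (φ θ)
  refine ⟨bind₁ (fun i => map (Int.castRingHom ℚ) (s i)) g, fun u => ?_⟩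
  dsimp only
  rw [hφ, hg, eval_bind₁]
  simp only [intCast_eval]

theorem IsPolynomialOnCosets.signedSum_head {m p : ℕ} (hp : 0 < p)
    {f : (Fin (m + 1) → ℤ) → ℚ} (hf : IsPolynomialOnCosets p f) :
    IsPolynomialOnCosets p fun x => signedSum 0 (x 0) fun k => f (Fin.cons k (Fin.tail x)) := by
  intro θ
  choose g hg using fun r : ℕ => hf (Fin.cons (r : ℤ) (Fin.tail θ))
  choose F hF using fun r => exists_signedSum_eval_eq (g r)
  refine ⟨∑ r ∈ Finset.range p, bind₁ (Fin.cons (X 0 + C (((θ 0 - r) / p : ℤ) : ℚ))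
    fun i => X i.succ) (F r), fun u => ?_⟩
  have hp' : (p : ℤ) ≠ 0 := by exact_mod_cast hp.ne'
  calc _ = ∑ r ∈ Finset.range p, signedSum 0 ((θ 0 - r) / p + u 0) fun j =>
          eval (fun i => ((Fin.cons j (Fin.tail u) : Fin (m + 1) → ℤ) i : ℚ)) (g r) := by
        dsimp only
        rw [signedSum_zero_eq_sum_residues hp]
        refine Finset.sum_congr rfl fun r _ => ?_
        rw [Pi.add_apply, Pi.smul_apply, smul_eq_mul, add_sub_right_comm,
          Int.add_mul_ediv_left _ _ hp']
        congr 1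
        funext j
        rw [← hg]
        congr 1
        ext i
        refine Fin.cases ?_ (fun i => ?_) i <;> simp [Fin.tail]
    _ = ∑ r ∈ Finset.range p, eval (fun i =>
          ((Fin.cons ((θ 0 - r) / p + u 0) (Fin.tail u) : Fin (m + 1) → ℤ) i : ℚ)) (F r) :=
        Finset.sum_congr rfl fun r _ => hF r _ _
    _ = _ := by
        simp only [map_sum, eval_bind₁]
        refine Finset.sum_congr rfl fun r _ =>
          congrArg (fun x => eval x (F r)) (funext fun i => ?_)
        refine Fin.cases ?_ (fun i => ?_) i <;> simp [Fin.tail, add_comm]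

theorem IsPolynomialOnCosets.comp_shear {m : ℕ} {p : ℤ} {q : (Fin m → ℤ) → ℚ}
    (hq : IsPolynomialOnCosets p q) (a : Fin m → ℤ) :
    IsPolynomialOnCosets p fun x : Fin (m + 1) → ℤ => q fun i => x i.succ + a i * x 0 :=
  hq.comp (fun i => X i.succ + C (a i) * X 0) fun θ u => by
    ext i
    simp only [Pi.add_apply, Pi.smul_apply, smul_eq_mul, map_add, map_mul, eval_X, eval_C]
    ring

theorem IsPolynomialOnCosets.comp_floor_head {m : ℕ} {p : ℤ} {S : (Fin (m + 1) → ℤ) → ℚ}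
    (hS : IsPolynomialOnCosets p S) (c : Fin (m + 1) → ℤ) {d : ℤ} (hd : d ≠ 0) :
    IsPolynomialOnCosets (p * d) fun t =>
      S (Fin.cons ⌊((∑ i, c i * t i : ℤ) : ℚ) / d⌋ (Fin.tail t)) :=
  hS.comp (Fin.cons (∑ j, C (c j) * X j) fun i => C d * X i.succ) fun θ u => by
    ext i
    refine Fin.cases ?_ (fun i => ?_) i
    · have hlin : ∑ j, c j * (θ j + p * d * u j) =
          ∑ j, c j * θ j + d * (p * ∑ j, c j * u j) := by
        simp only [mul_add, Finset.sum_add_distrib, Finset.mul_sum]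
        exact congrArg _ (Finset.sum_congr rfl fun j _ => by ring)
      simp only [Fin.cons_zero, Pi.add_apply, Pi.smul_apply, smul_eq_mul, map_sum, map_mul,
        eval_C, eval_X]
      rw [hlin, floor_intCast_add_mul_div hd]
    · simp only [Fin.cons_succ, Fin.tail, Pi.add_apply, Pi.smul_apply, smul_eq_mul, map_mul,
        eval_C, eval_X]
      ring

/-- **Lemma on quasipolynomials, second sum.**  If `q : ℤ^m → ℚ` is a quasipolynomial and
`a₁,…,a_m, c₀,…,c_m, d` are integers with `d ≠ 0`, then
`Q₂(t₀,…,t_m) = ∑_{k=0}^{⌊(c₀t₀+⋯+c_mt_m)/d⌋} q(t₁+a₁k, …, t_m+a_mk)`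
(signed-sum convention) is a quasipolynomial on `ℤ^{m+1}`. -/
theorem quasipolynomial_signed_sum_two
    (m : ℕ) (q : (Fin m → ℤ) → ℚ) (hq : IsQuasiPolynomial q)
    (a : Fin m → ℤ) (c : Fin (m + 1) → ℤ) (d : ℤ) (hd : d ≠ 0) :
    IsQuasiPolynomial (fun t : Fin (m + 1) → ℤ =>
      signedSum 0 ⌊((∑ i, c i * t i : ℤ) : ℚ) / (d : ℚ)⌋
        (fun k => q fun i => t i.succ + a i * k)) := by
  obtain ⟨p, hp, hqp⟩ := hq.exists_isPolynomialOnCosets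
  have hsum := (hqp.comp_shear a).signedSum_head hp
  have hQ₂ := hsum.comp_floor_head c hd
  exact hQ₂.isQuasiPolynomial (mul_ne_zero (by exact_mod_cast hp.ne') hd)
end

section
/- Slicing recursion for the interior count: Let n ≥ 2, let a_1 > 0 be an integer, let α_2, …, α_{n+1} be integers, let B be an n×(n−1) integer matrix with rows B_2, …, B_{n+1}, and let c_2, …, c_n, d be integers with d > 0. For t = (t_1, …, t_{n+1}) ∈ ℤ^{n+1} let S°(t) = {x ∈ ℝ^n : a_1 x_1 > t_1, and α_i x_1 + B_i·(x_2, …, x_n) < t_i for i = 2, …, n+1}. Suppose S°(t) is bounded and every x ∈ S°(t) satisfies x_1 < (c_2 t_2 + ⋯ + c_n t_n)/d. Then the number of points of ℤ^n in S°(t) equals Σ_{m = ⌊t_1/a_1⌋ + 1}^{⌊(c_2 t_2 + ⋯ + c_n t_n − 1)/d⌋} #{y ∈ ℤ^{n−1} : B y < (t_2 − α_2 m, …, t_{n+1} − α_{n+1} m) componentwise}, where the sum is an ordinary sum (empty, hence 0, if the lower limit exceeds the upper limit). -/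
/-- **Slicing recursion for the interior lattice-point count.**
Let `n = m + 2 ≥ 2`, let `a₁ > 0`, `α₂,…,α_{n+1}` be integers, `B` an `n × (n−1)`
integer matrix with rows `B₂,…,B_{n+1}`, and `c₂,…,c_n, d` integers with `d > 0`.
For `t = (t₁,…,t_{n+1}) ∈ ℤ^{n+1}` let
`S°(t) = {x ∈ ℝⁿ : a₁x₁ > t₁ and αᵢx₁ + Bᵢ·(x₂,…,x_n) < tᵢ for i = 2,…,n+1}`.
If `S°(t)` is bounded and every `x ∈ S°(t)` satisfies `x₁ < (c₂t₂+⋯+c_nt_n)/d`, then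
`#(S°(t) ∩ ℤⁿ) = ∑_{m'=⌊t₁/a₁⌋+1}^{⌊(c₂t₂+⋯+c_nt_n−1)/d⌋} #{y ∈ ℤ^{n−1} : B y < (t₂−α₂m',…,t_{n+1}−α_{n+1}m')}`
(ordinary sum, empty if the lower limit exceeds the upper limit).
Here `t₁` is given separately and `t : Fin (m+2) → ℤ` lists `t₂,…,t_{n+1}`. -/
theorem interior_count_slicing
    (m : ℕ) (a₁ : ℤ) (ha₁ : 0 < a₁) (α : Fin (m + 2) → ℤ)
    (B : Matrix (Fin (m + 2)) (Fin (m + 1)) ℤ)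
    (c : Fin (m + 1) → ℤ) (d : ℤ) (hd : 0 < d)
    (t₁ : ℤ) (t : Fin (m + 2) → ℤ)
    (S : Set (Fin (m + 2) → ℝ))
    (hS : S = {x : Fin (m + 2) → ℝ |
      (t₁ : ℝ) < (a₁ : ℝ) * x 0 ∧
      ∀ i : Fin (m + 2), (α i : ℝ) * x 0 + ∑ j, (B i j : ℝ) * x j.succ < (t i : ℝ)})
    (hbdd : Bornology.IsBounded S)
    (hvert : ∀ x ∈ S, x 0 < ((∑ i : Fin (m + 1), c i * t i.castSucc : ℤ) : ℝ) / (d : ℝ)) :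
    ({x : Fin (m + 2) → ℤ | (fun i => (x i : ℝ)) ∈ S}.ncard : ℤ)
      = ∑ m' ∈ Finset.Icc (⌊(t₁ : ℚ) / (a₁ : ℚ)⌋ + 1)
            ⌊((∑ i : Fin (m + 1), c i * t i.castSucc : ℤ) - 1 : ℚ) / (d : ℚ)⌋,
          ({y : Fin (m + 1) → ℤ |
            ∀ i : Fin (m + 2), ∑ j, B i j * y j < t i - α i * m'}.ncard : ℤ) := by
  set Sg : ℤ := ∑ i : Fin (m + 1), c i * t i.castSucc with hSg
  set T : Set (Fin (m + 2) → ℤ) := {x : Fin (m + 2) → ℤ | (fun i => (x i : ℝ)) ∈ S} with hT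
  set L : ℤ := ⌊(t₁ : ℚ) / (a₁ : ℚ)⌋ + 1 with hLdef
  set U : ℤ := ⌊((Sg : ℤ) - 1 : ℚ) / (d : ℚ)⌋ with hUdef
  -- membership characterization
  have hmem : ∀ x : Fin (m + 2) → ℤ, x ∈ T ↔
      (t₁ < a₁ * x 0 ∧ ∀ i, α i * x 0 + ∑ j, B i j * x j.succ < t i) := by
    intro x
    rw [hT, Set.mem_setOf_eq, hS, Set.mem_setOf_eq]
    beta_reduce
    constructor
    · rintro ⟨h1, h2⟩
      refine ⟨by exact_mod_cast h1, fun i => ?_⟩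
      have := h2 i
      exact_mod_cast this
    · rintro ⟨h1, h2⟩
      refine ⟨by exact_mod_cast h1, fun i => ?_⟩
      have := h2 i
      exact_mod_cast this
  -- finiteness of T
  obtain ⟨r, hr⟩ := hbdd.subset_closedBall 0
  have hTfin : T.Finite := by
    apply Set.Finite.subset (Set.Finite.pi
      (fun _ : Fin (m + 2) => Set.finite_Icc (⌈-r⌉ : ℤ) ⌊r⌋))
    intro x hx
    have hball := hr hx
    rw [Metric.mem_closedBall, dist_zero_right] at hball
    intro i _
    have hni : |((x i : ℤ) : ℝ)| ≤ r :=
      le_trans (by simpa using norm_le_pi_norm (fun i => (x i : ℝ)) i) hball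
    rw [abs_le] at hni
    exact ⟨Int.ceil_le.mpr (by linarith [hni.1]), Int.le_floor.mpr hni.2⟩
  -- bounds characterization
  have hL : ∀ m' : ℤ, L ≤ m' ↔ t₁ < a₁ * m' := by
    intro m'
    rw [hLdef, Int.add_one_le_iff, Int.floor_lt,
      div_lt_iff₀ (by exact_mod_cast ha₁ : (0 : ℚ) < (a₁ : ℚ))]
    constructor
    · intro h
      have h' : (t₁ : ℚ) < (a₁ : ℚ) * (m' : ℚ) := by linarith [h]
      exact_mod_cast h'
    · intro h
      have h' : (t₁ : ℚ) < (a₁ : ℚ) * (m' : ℚ) := by exact_mod_cast h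
      linarith
  have hU : ∀ m' : ℤ, m' ≤ U ↔ d * m' < Sg := by
    intro m'
    rw [hUdef, Int.le_floor,
      le_div_iff₀ (by exact_mod_cast hd : (0 : ℚ) < (d : ℚ))]
    constructor
    · intro h
      have h' : (d : ℚ) * (m' : ℚ) ≤ (Sg : ℚ) - 1 := by linarith
      have h'' : d * m' ≤ Sg - 1 := by exact_mod_cast h'
      omega
    · intro h
      have h'' : d * m' ≤ Sg - 1 := by omega
      have h' : (d : ℚ) * (m' : ℚ) ≤ (Sg : ℚ) - 1 := by exact_mod_cast h''
      linarith
  have hx0U : ∀ x ∈ T, d * x 0 < Sg := by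
    intro x hx
    have := hvert _ hx
    rw [lt_div_iff₀ (by exact_mod_cast hd : (0 : ℝ) < (d : ℝ))] at this
    have h' : ((x 0 : ℤ) : ℝ) * (d : ℝ) < (Sg : ℝ) := this
    have h'' : x 0 * d < Sg := by exact_mod_cast h'
    linarith
  -- fibers
  have hfiber : ∀ x ∈ hTfin.toFinset, x 0 ∈ Finset.Icc L U := by
    intro x hx
    rw [Set.Finite.mem_toFinset] at hx
    rw [Finset.mem_Icc]
    exact ⟨(hL (x 0)).mpr ((hmem x).mp hx).1, (hU (x 0)).mpr (hx0U x hx)⟩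
  classical
  rw [Set.ncard_eq_toFinset_card T hTfin,
    Finset.card_eq_sum_card_fiberwise hfiber]
  push_cast
  apply Finset.sum_congr rfl
  intro m' hm'
  rw [Finset.mem_Icc] at hm'
  congr 1
  -- slice set equals image of fiber under tail map
  have himg : {y : Fin (m + 1) → ℤ |
      ∀ i : Fin (m + 2), ∑ j, B i j * y j < t i - α i * m'} =
      (fun x : Fin (m + 2) → ℤ => fun j => x j.succ) ''
        (↑(hTfin.toFinset.filter (fun x => x 0 = m')) : Set (Fin (m + 2) → ℤ)) := by
    ext y
    simp only [Set.mem_setOf_eq, Set.mem_image, Finset.coe_filter,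
      Set.Finite.mem_toFinset, Set.mem_setOf_eq]
    constructor
    · intro hy
      refine ⟨Fin.cons m' y, ⟨?_, Fin.cons_zero _ _⟩, ?_⟩
      · rw [hmem]
        constructor
        · rw [Fin.cons_zero]
          exact (hL m').mp hm'.1
        · intro i
          have := hy i
          simp only [Fin.cons_succ, Fin.cons_zero]
          linarith
      · funext j
        exact Fin.cons_succ _ _ _
    · rintro ⟨x, ⟨hxT, hx0⟩, rfl⟩
      intro i
      have := ((hmem x).mp hxT).2 i
      rw [hx0] at this
      linarith
  rw [himg, Set.ncard_image_of_injOn, Set.ncard_coe_finset]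
  intro x hx x' hx' h
  simp only [Finset.coe_filter, Set.mem_setOf_eq] at hx hx'
  funext i
  refine Fin.cases ?_ (fun j => ?_) i
  · rw [hx.2, hx'.2]
  · exact congrFun h j
end

section
/- Generating-function identity for the rectangular rational triangle: Let a_1, a_2, c_1, c_2 be positive integers and t_1, t_2, t_3 integers. Set e_j = (⌊(t_j − 1)/a_j⌋ + 1)·c_j for j = 1, 2, and suppose N := t_3 − e_1 − e_2 ≥ 0. Then the number of pairs (m_1, m_2) ∈ ℤ² with a_1 m_1 ≥ t_1, a_2 m_2 ≥ t_2, and c_1 m_1 + c_2 m_2 ≤ t_3 equals the coefficient of X^N in the formal power series (1 − X^{c_1})^{−1} (1 − X^{c_2})^{−1} (1 − X)^{−1} over ℚ. -/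
/-!
Translating by `bⱼ = ⌊(tⱼ - 1)/aⱼ⌋ + 1 = ⌈tⱼ/aⱼ⌉` identifies the lattice points of the triangle
with the pairs `(k₁, k₂) ∈ ℕ²` such that `c₁k₁ + c₂k₂ ≤ N`. On the series side, `(1 - X^c)⁻¹` is
the generating series of the weight `k ↦ c k` on `ℕ`, and a product of generating series is the
generating series of the summed weight on the product. So the coefficient of `X^N` counts the
triples with `c₁k₁ + c₂k₂ + k₃ = N`, where `k₃` is the slack in `c₁k₁ + c₂k₂ ≤ N`.
-/

open PowerSeries Finset

theorem le_mul_iff_floor_sub_one_div_add_one_le {K : Type*} [Field K] [LinearOrder K]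
    [IsStrictOrderedRing K] [FloorRing K] {a : ℕ} (ha : 0 < a) (t m : ℤ) :
    t ≤ a * m ↔ ⌊((t : K) - 1) / a⌋ + 1 ≤ m := by
  rw [Int.add_one_le_iff, Int.floor_lt, div_lt_iff₀ (by exact_mod_cast ha), mul_comm]
  norm_cast
  omega

section Fibers

variable {α β : Type*}

def preimageAddEquiv (w₁ : α → ℕ) (w₂ : β → ℕ) (n : ℕ) :
    ((fun p : α × β => w₁ p.1 + w₂ p.2) ⁻¹' {n}) ≃
      Σ q : antidiagonal n, (w₁ ⁻¹' {q.1.1}) × (w₂ ⁻¹' {q.1.2}) where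
  toFun p := ⟨⟨(w₁ p.1.1, w₂ p.1.2), mem_antidiagonal.2 p.2⟩, ⟨p.1.1, rfl⟩, ⟨p.1.2, rfl⟩⟩
  invFun s := ⟨(s.2.1, s.2.2), by
    obtain ⟨⟨q, hq⟩, ⟨a, ha⟩, ⟨b, hb⟩⟩ := s
    simp only [Set.mem_preimage, Set.mem_singleton_iff] at ha hb ⊢
    rw [ha, hb, mem_antidiagonal.1 hq]⟩
  left_inv _ := rfl
  right_inv := by
    rintro ⟨⟨⟨q₁, q₂⟩, hq⟩, ⟨a, ha⟩, ⟨b, hb⟩⟩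
    change w₁ a = q₁ at ha
    change w₂ b = q₂ at hb
    subst ha hb
    rfl

theorem finite_preimage_add {w₁ : α → ℕ} {w₂ : β → ℕ} (h₁ : ∀ n, (w₁ ⁻¹' {n}).Finite)
    (h₂ : ∀ n, (w₂ ⁻¹' {n}).Finite) (n : ℕ) :
    ((fun p : α × β => w₁ p.1 + w₂ p.2) ⁻¹' {n}).Finite := by
  have := fun n => (h₁ n).to_subtype
  have := fun n => (h₂ n).to_subtype
  exact Set.finite_coe_iff.mp (Finite.of_equiv _ (preimageAddEquiv w₁ w₂ n).symm)

theorem ncard_preimage_add_eq_ncard_le (w : α → ℕ) (N : ℕ) :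
    ((fun p : α × ℕ => w p.1 + p.2) ⁻¹' {N}).ncard = {a | w a ≤ N}.ncard := by
  have hslack : (fun p : α × ℕ => w p.1 + p.2) ⁻¹' {N}
      = (fun a => (a, N - w a)) '' {a | w a ≤ N} := by
    ext ⟨a, k⟩
    simp only [Set.mem_preimage, Set.mem_singleton_iff, Set.mem_image, Set.mem_ofPred_eq,
      Prod.mk.injEq]
    constructor
    · rintro rfl
      exact ⟨a, by omega, rfl, by omega⟩
    · rintro ⟨a, h, rfl, rfl⟩
      omega
  rw [hslack, Set.ncard_image_of_injective _ fun a b h => congrArg Prod.fst h]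

end Fibers

theorem finite_preimage_mul_left {c : ℕ} (hc : 0 < c) (n : ℕ) : ((c * ·) ⁻¹' {n}).Finite :=
  Set.Subsingleton.finite fun _ hi _ hj => Nat.eq_of_mul_eq_mul_left hc (hi.trans hj.symm)

theorem ncard_preimage_mul_left {c : ℕ} (hc : 0 < c) (n : ℕ) :
    ((c * ·) ⁻¹' {n}).ncard = if c ∣ n then 1 else 0 := by
  split_ifs with h
  · obtain ⟨k, rfl⟩ := h
    rw [Set.ncard_eq_one]
    exact ⟨k, Set.ext fun j => by simp [hc.ne']⟩
  · rw [Set.ncard_eq_zero (finite_preimage_mul_left hc n)]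
    exact Set.eq_empty_of_forall_notMem fun j (hj : c * j = n) => h ⟨j, hj.symm⟩

namespace PowerSeries

section WeightSeries

variable {R : Type*} [Semiring R] {α β : Type*}

variable (R) in
noncomputable def weightSeries (w : α → ℕ) : R⟦X⟧ :=
  mk fun n => ((w ⁻¹' {n}).ncard : R)

@[simp]
theorem coeff_weightSeries (w : α → ℕ) (n : ℕ) :
    coeff n (weightSeries R w) = ((w ⁻¹' {n}).ncard : R) :=
  coeff_mk _ _

theorem weightSeries_mul {w₁ : α → ℕ} {w₂ : β → ℕ} (h₁ : ∀ n, (w₁ ⁻¹' {n}).Finite)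
    (h₂ : ∀ n, (w₂ ⁻¹' {n}).Finite) :
    weightSeries R w₁ * weightSeries R w₂
      = weightSeries R (fun p : α × β => w₁ p.1 + w₂ p.2) := by
  have := fun n => (h₁ n).to_subtype
  have := fun n => (h₂ n).to_subtype
  ext n
  rw [coeff_mul, coeff_weightSeries, ← Nat.card_coe_set_eq,
    Nat.card_congr (preimageAddEquiv w₁ w₂ n), Nat.card_sigma, ← sum_coe_sort]
  simp [Nat.card_prod, Nat.card_coe_set_eq]

end WeightSeries

theorem weightSeries_mul_left_mul_one_sub_X_pow {R : Type*} [Ring R] {c : ℕ} (hc : 0 < c) :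
    weightSeries R (c * ·) * (1 - X ^ c) = 1 := by
  ext n
  rw [mul_sub, mul_one, map_sub, coeff_mul_X_pow', coeff_one]
  simp only [coeff_weightSeries, ncard_preimage_mul_left hc]
  by_cases hcn : c ≤ n
  · simp [hcn, Nat.dvd_sub_iff_left hcn dvd_rfl, show n ≠ 0 by omega]
  · have : c ∣ n ↔ n = 0 :=
      ⟨fun h => Nat.eq_zero_of_dvd_of_lt h (by omega), by rintro rfl; exact dvd_zero c⟩
    simp [hcn, this]

theorem inv_one_sub_X_pow_eq_weightSeries {k : Type*} [Field k] {c : ℕ} (hc : 0 < c) :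
    (1 - X ^ c : k⟦X⟧)⁻¹ = weightSeries k (c * ·) :=
  ((eq_inv_iff_mul_eq_one (by simp [hc.ne'])).2 (weightSeries_mul_left_mul_one_sub_X_pow hc)).symm

theorem coeff_inv_one_sub_X_pow_mul_inv_one_sub_X_pow_mul_inv_one_sub_X {k : Type*} [Field k]
    {c₁ c₂ : ℕ} (hc₁ : 0 < c₁) (hc₂ : 0 < c₂) (N : ℕ) :
    coeff N ((1 - X ^ c₁)⁻¹ * (1 - X ^ c₂)⁻¹ * (1 - X)⁻¹ : k⟦X⟧)
      = {p : ℕ × ℕ | c₁ * p.1 + c₂ * p.2 ≤ N}.ncard := by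
  have h₁ := finite_preimage_mul_left hc₁
  have h₂ := finite_preimage_mul_left hc₂
  rw [show (1 - X : k⟦X⟧) = 1 - X ^ 1 by rw [pow_one], inv_one_sub_X_pow_eq_weightSeries hc₁,
    inv_one_sub_X_pow_eq_weightSeries hc₂, inv_one_sub_X_pow_eq_weightSeries one_pos,
    weightSeries_mul h₁ h₂,
    weightSeries_mul (finite_preimage_add h₁ h₂) (finite_preimage_mul_left one_pos),
    coeff_weightSeries]
  simp only [one_mul]
  rw [ncard_preimage_add_eq_ncard_le (fun p : ℕ × ℕ => c₁ * p.1 + c₂ * p.2)]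

end PowerSeries

theorem ncard_int_triangle_eq_ncard_nat_triangle (b₁ b₂ t : ℤ) (c₁ c₂ N : ℕ)
    (hN : (N : ℤ) = t - c₁ * b₁ - c₂ * b₂) :
    {p : ℤ × ℤ | b₁ ≤ p.1 ∧ b₂ ≤ p.2 ∧ c₁ * p.1 + c₂ * p.2 ≤ t}.ncard
      = {k : ℕ × ℕ | c₁ * k.1 + c₂ * k.2 ≤ N}.ncard := by
  have htranslate : {p : ℤ × ℤ | b₁ ≤ p.1 ∧ b₂ ≤ p.2 ∧ c₁ * p.1 + c₂ * p.2 ≤ t}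
      = (fun k : ℕ × ℕ => (b₁ + k.1, b₂ + k.2)) '' {k | c₁ * k.1 + c₂ * k.2 ≤ N} := by
    ext ⟨p₁, p₂⟩
    simp only [Set.mem_ofPred_eq, Set.mem_image, Prod.exists, Prod.mk.injEq]
    constructor
    · rintro ⟨h₁, h₂, h⟩
      obtain ⟨k₁, hk₁⟩ := Int.eq_ofNat_of_zero_le (sub_nonneg.2 h₁)
      obtain ⟨k₂, hk₂⟩ := Int.eq_ofNat_of_zero_le (sub_nonneg.2 h₂)
      refine ⟨k₁, k₂, ?_, by omega, by omega⟩
      zify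
      rw [← hk₁, ← hk₂]
      linarith
    · rintro ⟨k₁, k₂, hk, rfl, rfl⟩
      zify at hk
      exact ⟨by omega, by omega, by linarith⟩
  rw [htranslate, Set.ncard_image_of_injective _ fun k l h => by
    simp only [Prod.mk.injEq, add_right_inj, Nat.cast_inj] at h
    exact Prod.ext h.1 h.2]

/-- **Generating-function identity for the rectangular rational triangle.**
For positive integers `a₁, a₂, c₁, c₂` and integers `t₁, t₂, t₃`, set
`eⱼ = (⌊(tⱼ−1)/aⱼ⌋+1)·cⱼ` and suppose `N = t₃ − e₁ − e₂ ≥ 0`.  Then the number of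
pairs `(m₁, m₂) ∈ ℤ²` with `a₁m₁ ≥ t₁`, `a₂m₂ ≥ t₂` and `c₁m₁ + c₂m₂ ≤ t₃` equals
the coefficient of `X^N` in `(1−X^{c₁})⁻¹(1−X^{c₂})⁻¹(1−X)⁻¹ ∈ ℚ⟦X⟧`. -/
theorem rectangular_triangle_generating_function
    (a₁ a₂ c₁ c₂ : ℕ) (ha₁ : 0 < a₁) (ha₂ : 0 < a₂) (hc₁ : 0 < c₁) (hc₂ : 0 < c₂)
    (t₁ t₂ t₃ : ℤ)
    (e₁ e₂ : ℤ)
    (he₁ : e₁ = (⌊((t₁ : ℚ) - 1) / (a₁ : ℚ)⌋ + 1) * c₁)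
    (he₂ : e₂ = (⌊((t₂ : ℚ) - 1) / (a₂ : ℚ)⌋ + 1) * c₂)
    (hN : 0 ≤ t₃ - e₁ - e₂) :
    ({p : ℤ × ℤ | t₁ ≤ (a₁ : ℤ) * p.1 ∧ t₂ ≤ (a₂ : ℤ) * p.2 ∧
        (c₁ : ℤ) * p.1 + (c₂ : ℤ) * p.2 ≤ t₃}.ncard : ℚ)
      = PowerSeries.coeff (R := ℚ) (t₃ - e₁ - e₂).toNat
          ((1 - PowerSeries.X ^ c₁)⁻¹ * (1 - PowerSeries.X ^ c₂)⁻¹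
            * (1 - PowerSeries.X)⁻¹) := by
  obtain ⟨N, hNeq⟩ : ∃ N : ℕ, (N : ℤ) = t₃ - e₁ - e₂ := ⟨_, Int.toNat_of_nonneg hN⟩
  simp only [le_mul_iff_floor_sub_one_div_add_one_le (K := ℚ) ha₁,
    le_mul_iff_floor_sub_one_div_add_one_le (K := ℚ) ha₂]
  rw [← hNeq, Int.toNat_natCast,
    coeff_inv_one_sub_X_pow_mul_inv_one_sub_X_pow_mul_inv_one_sub_X hc₁ hc₂,
    ncard_int_triangle_eq_ncard_nat_triangle _ _ t₃ c₁ c₂ N (by rw [hNeq, he₁, he₂]; ring)]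
end

section
/- Lattice-point count of the rectangular rational triangle: Let a_1, a_2, c_1, c_2 be positive integers with gcd(c_1, c_2) = 1, and let t_1, t_2, t_3 be integers with c_1 t_1 a_2 + c_2 t_2 a_1 ≤ t_3 a_1 a_2. Set e_j = (⌊(t_j − 1)/a_j⌋ + 1)·c_j for j = 1, 2. Then the number of pairs (m_1, m_2) ∈ ℤ² with a_1 m_1 ≥ t_1, a_2 m_2 ≥ t_2, and c_1 m_1 + c_2 m_2 ≤ t_3 equals (e_1 + e_2 − t_3)²/(2 c_1 c_2) − (1/2)(e_1 + e_2 − t_3)(1/c_1 + 1/c_2 + 1/(c_1 c_2)) + 1/4 + (1/12)(c_1/c_2 + c_2/c_1 + 1/(c_1 c_2)) + Σ_{k=0}^{c_1 − 1} (((t_3 − e_2 − c_2 k)/c_1)) · ((k/c_1)) + Σ_{k=0}^{c_2 − 1} (((t_3 − e_1 − c_1 k)/c_2)) · ((k/c_2)), where ((x)) = x − ⌊x⌋ − 1/2 denotes the sawtooth function on ℚ. -/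
/-- The sawtooth function `((x)) = x − ⌊x⌋ − 1/2`. -/
def sawtooth (x : ℚ) : ℚ := x - ⌊x⌋ - 1 / 2

open Finset

set_option maxRecDepth 8000

lemma saw_fract (x : ℚ) : sawtooth x = Int.fract x - 1/2 := by
  unfold sawtooth Int.fract; ring

lemma saw_add_int (x : ℚ) (m : ℤ) : sawtooth (x + m) = sawtooth x := by
  rw [saw_fract, saw_fract, Int.fract_add_intCast]

lemma saw_int_div (m : ℤ) (c : ℕ) (hc : 0 < c) :
    sawtooth ((m:ℚ)/c) = ((m % (c:ℤ) : ℤ):ℚ)/c - 1/2 := by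
  have hc' : (c:ℚ) ≠ 0 := by positivity
  have keyz : m = m % (c:ℤ) + (m / (c:ℤ)) * c := by
    have := Int.emod_add_mul_ediv m (c:ℤ); linarith
  have key : (m:ℚ) = ((m % (c:ℤ) : ℤ):ℚ) + ((m / (c:ℤ) : ℤ):ℚ) * c := by
    exact_mod_cast keyz
  have h1 : (m:ℚ)/c = ((m % (c:ℤ) : ℤ):ℚ)/c + ((m / (c:ℤ) : ℤ):ℚ) := by
    rw [key, add_div, mul_div_cancel_right₀ _ hc']
  have hrn : (0:ℤ) ≤ m % (c:ℤ) := Int.emod_nonneg m (by exact_mod_cast hc.ne')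
  have hrl : m % (c:ℤ) < c := Int.emod_lt_of_pos m (by exact_mod_cast hc)
  rw [h1, saw_add_int, saw_fract, Int.fract_eq_self.2 ⟨by positivity, by
    rw [div_lt_one (by positivity)]; exact_mod_cast hrl⟩]

lemma saw_nat_div (m c : ℕ) (hc : 0 < c) :
    sawtooth ((m:ℚ)/c) = ((m % c : ℕ):ℚ)/c - 1/2 := by
  have e1 : ((m:ℕ):ℚ) = (((m:ℤ)):ℚ) := by simp
  have e2 : ((m % c:ℕ):ℚ) = (((m:ℤ) % (c:ℤ) : ℤ):ℚ) := by norm_cast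
  rw [e1, e2]; exact saw_int_div m c hc

lemma saw_lt (k c : ℕ) (hk : k < c) : sawtooth ((k:ℚ)/c) = (k:ℚ)/c - 1/2 := by
  have hc : 0 < c := by omega
  rw [saw_nat_div k c hc, Nat.mod_eq_of_lt hk]

lemma sum_cast_range (n : ℕ) : ∑ k ∈ range n, (k:ℚ) = n*(n-1)/2 := by
  induction n with
  | zero => simp
  | succ n ih => rw [Finset.sum_range_succ, ih]; push_cast; ring

lemma sum_cast_sq_range (n : ℕ) : ∑ k ∈ range n, (k:ℚ)^2 = n*(n-1)*(2*n-1)/6 := by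
  induction n with
  | zero => simp
  | succ n ih => rw [Finset.sum_range_succ, ih]; push_cast; ring

lemma sum_saw_range (c : ℕ) (hc : 0 < c) : ∑ k ∈ range c, sawtooth ((k:ℚ)/c) = -(1/2) := by
  have hc' : (c:ℚ) ≠ 0 := by positivity
  rw [Finset.sum_congr rfl (fun k hk => saw_lt k c (mem_range.1 hk)),
    Finset.sum_sub_distrib, ← Finset.sum_div, sum_cast_range, Finset.sum_const, card_range]
  simp only [nsmul_eq_mul]
  field_simp
  ring

lemma sum_mulmod (b c : ℕ) (hc : 0 < c) (hco : Nat.Coprime b c) (f : ℕ → ℚ) :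
    ∑ k ∈ range c, f (b*k % c) = ∑ k ∈ range c, f k := by
  have hinj : ∀ x ∈ range c, ∀ y ∈ range c, b*x % c = b*y % c → x = y := by
    intro x hx y hy hxy
    rw [mem_range] at hx hy
    have h1 : b*x ≡ b*y [MOD c] := hxy
    have h2 : x ≡ y [MOD c] := Nat.ModEq.cancel_left_of_coprime (by rwa [Nat.coprime_comm] at hco) h1
    have := Nat.ModEq.eq_of_lt_of_lt h2 hx hy
    exact this
  have himg : (range c).image (fun k => b*k % c) = range c := by
    apply Finset.eq_of_subset_of_card_le
    · intro m hm
      rw [Finset.mem_image] at hm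
      obtain ⟨k, _, rfl⟩ := hm
      exact mem_range.2 (Nat.mod_lt _ hc)
    · rw [Finset.card_image_of_injOn hinj]
  calc ∑ k ∈ range c, f (b*k % c) = ∑ m ∈ (range c).image (fun k => b*k % c), f m :=
        (Finset.sum_image hinj).symm
    _ = ∑ k ∈ range c, f k := by rw [himg]

lemma filter_mul_lt (b c j : ℕ) (hb : 0 < b) (hc : 0 < c) (hco : Nat.Coprime b c)
    (hj0 : 0 < j) (hj : j < c) :
    (range b).filter (fun m => c*m < b*j) = range (b*j/c + 1) := by
  have hndvd : ¬ (c ∣ b*j) := by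
    intro h
    have hcj : c ∣ j := (Nat.Coprime.dvd_of_dvd_mul_left (hco.symm)) h
    have := Nat.le_of_dvd hj0 hcj
    omega
  have hbj : b*j < c*b := by rw [mul_comm c b]; exact mul_lt_mul_of_pos_left hj hb
  have hq : b*j/c < b := Nat.div_lt_of_lt_mul hbj
  ext m
  simp only [mem_filter, mem_range]
  constructor
  · rintro ⟨hm, hlt⟩
    have h1 : m*c ≤ b*j := by rw [mul_comm]; omega
    have : m ≤ b*j/c := (Nat.le_div_iff_mul_le hc).2 h1
    omega
  · intro hm
    have hm' : m ≤ b*j/c := by omega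
    have h1 : m*c ≤ b*j := (Nat.le_div_iff_mul_le hc).1 hm'
    have h2 : c*m ≠ b*j := by
      intro h
      exact hndvd ⟨m, h.symm⟩
    rw [mul_comm m c] at h1
    exact ⟨by omega, by omega⟩

-- cast div/mod relation

lemma divmod_cast (a c : ℕ) (hc : 0 < c) :
    ((a / c : ℕ):ℚ) = ((a:ℚ) - ((a % c : ℕ):ℚ))/c := by
  have hcq : (c:ℚ) ≠ 0 := by positivity
  have h : (c:ℚ)*((a/c:ℕ):ℚ) + ((a % c:ℕ):ℚ) = (a:ℚ) := by
    exact_mod_cast Nat.div_add_mod a c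
  rw [eq_div_iff hcq]
  linarith

lemma inner_A (b c j : ℕ) (hb : 0 < b) (hc : 0 < c) (hco : Nat.Coprime b c) (hj : j < c) :
    ∑ m ∈ range b, (if c*m < b*j then ((b*j:ℚ) - (c*m:ℚ)) else 0)
      = (b:ℚ)^2*(j:ℚ)^2/(2*c) - ((b*j % c : ℕ):ℚ)^2/(2*c)
        + (b:ℚ)*(j:ℚ)/2 + ((b*j % c : ℕ):ℚ)/2 := by
  have hcq : (c:ℚ) ≠ 0 := by positivity
  rcases Nat.eq_zero_or_pos j with rfl | hj0
  · simp
  · rw [← Finset.sum_filter, filter_mul_lt b c j hb hc hco hj0 hj]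
    rw [Finset.sum_sub_distrib, Finset.sum_const, card_range, ← Finset.mul_sum, sum_cast_range]
    simp only [nsmul_eq_mul]
    push_cast
    rw [divmod_cast (b*j) c hc]
    push_cast
    field_simp
    ring

lemma A_eval (b c : ℕ) (hb : 0 < b) (hc : 0 < c) (hco : Nat.Coprime b c) :
    ∑ j ∈ range c, ∑ m ∈ range b, (if c*m < b*j then ((b*j:ℚ) - (c*m:ℚ)) else 0)
      = ((b:ℚ)^2-1)*((c:ℚ)*((c:ℚ)-1)*(2*(c:ℚ)-1)/6)/(2*c) + ((b:ℚ)+1)*((c:ℚ)*((c:ℚ)-1)/2)/2 := by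
  have hcq : (c:ℚ) ≠ 0 := by positivity
  rw [Finset.sum_congr rfl (fun j hj => inner_A b c j hb hc hco (mem_range.1 hj))]
  have h1 := sum_mulmod b c hc hco (fun m => ((m:ℕ):ℚ)^2)
  have h2 := sum_mulmod b c hc hco (fun m => ((m:ℕ):ℚ))
  rw [Finset.sum_add_distrib, Finset.sum_add_distrib, Finset.sum_sub_distrib]
  rw [show ∀ S : Finset ℕ, ∑ j ∈ S, (b:ℚ)^2*(j:ℚ)^2/(2*c) = ((b:ℚ)^2/(2*c)) * ∑ j ∈ S, (j:ℚ)^2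
    from fun S => by rw [Finset.mul_sum]; exact Finset.sum_congr rfl fun j _ => by ring]
  rw [show ∑ j ∈ range c, ((b*j % c :ℕ):ℚ)^2/(2*(c:ℚ)) = (1/(2*(c:ℚ))) * ∑ j ∈ range c, ((b*j % c :ℕ):ℚ)^2
    from by rw [Finset.mul_sum]; exact Finset.sum_congr rfl fun j _ => by ring]
  rw [show ∑ j ∈ range c, (b:ℚ)*(j:ℚ)/2 = ((b:ℚ)/2) * ∑ j ∈ range c, (j:ℚ)
    from by rw [Finset.mul_sum]; exact Finset.sum_congr rfl fun j _ => by ring]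
  rw [show ∑ j ∈ range c, ((b*j % c :ℕ):ℚ)/2 = (1/2) * ∑ j ∈ range c, ((b*j % c :ℕ):ℚ)
    from by rw [Finset.mul_sum]; exact Finset.sum_congr rfl fun j _ => by ring]
  rw [h1, h2, sum_cast_range, sum_cast_sq_range]
  field_simp
  ring

lemma inner_W (b c j : ℕ) (hb : 0 < b) (hc : 0 < c) (hco : Nat.Coprime b c) (hj : j < c) :
    ∑ m ∈ range b, (if c*m < b*j then ((b*j:ℚ)) else 0)
      = (b*j:ℚ)*(((b*j:ℚ) - ((b*j % c :ℕ):ℚ))/c) + (b*j:ℚ) := by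
  have hcq : (c:ℚ) ≠ 0 := by positivity
  rcases Nat.eq_zero_or_pos j with rfl | hj0
  · simp
  · rw [← Finset.sum_filter, filter_mul_lt b c j hb hc hco hj0 hj,
      Finset.sum_const, card_range, nsmul_eq_mul]
    push_cast
    rw [divmod_cast (b*j) c hc]
    push_cast
    ring

lemma W_eval (b c : ℕ) (hb : 0 < b) (hc : 0 < c) (hco : Nat.Coprime b c) :
    ∑ j ∈ range c, ∑ m ∈ range b, (if c*m < b*j then ((b*j:ℚ)) else 0)
      = ((b:ℚ)^2*((c:ℚ)*((c:ℚ)-1)*(2*(c:ℚ)-1)/6)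
          - (b:ℚ)*(∑ k ∈ range c, (k:ℚ)*((b*k % c :ℕ):ℚ)))/c + (b:ℚ)*((c:ℚ)*((c:ℚ)-1)/2) := by
  have hcq : (c:ℚ) ≠ 0 := by positivity
  rw [Finset.sum_congr rfl (fun j hj => inner_W b c j hb hc hco (mem_range.1 hj))]
  have e : ∀ j ∈ range c, (b*j:ℚ)*(((b*j:ℚ) - ((b*j % c :ℕ):ℚ))/c) + (b*j:ℚ)
      = ((b:ℚ)^2/c)*(j:ℚ)^2 - ((b:ℚ)/c)*((j:ℚ)*((b*j % c :ℕ):ℚ)) + (b:ℚ)*(j:ℚ) := by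
    intro j _; field_simp
  rw [Finset.sum_congr rfl e]
  simp only [Finset.sum_add_distrib, Finset.sum_sub_distrib, ← Finset.mul_sum]
  rw [sum_cast_range, sum_cast_sq_range]
  field_simp

lemma pairwise_max (b c j m : ℕ) (hco : Nat.Coprime b c) (hj : j < c) (hm : m < b) :
    (if c*m < b*j then ((b*j:ℚ)) else 0) + (if b*j < c*m then ((c*m:ℚ)) else 0)
      = ((b*j:ℚ) + (c*m:ℚ))/2
        + (if c*m < b*j then ((b*j:ℚ) - (c*m:ℚ)) else 0)/2
        + (if b*j < c*m then ((c*m:ℚ) - (b*j:ℚ)) else 0)/2 := by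
  rcases lt_trichotomy (c*m) (b*j) with h|h|h
  · rw [if_pos h, if_neg (by omega), if_pos h, if_neg (by omega)]
    have : ((c*m:ℕ):ℚ) < ((b*j:ℕ):ℚ) := by exact_mod_cast h
    push_cast at this
    ring
  · have hc0 : 0 < c := by omega
    have hj0 : j = 0 := by
      by_contra hne
      have hdvd : c ∣ b*j := ⟨m, h.symm⟩
      have : c ∣ j := Nat.Coprime.dvd_of_dvd_mul_left hco.symm hdvd
      have := Nat.le_of_dvd (by omega) this
      omega
    subst hj0
    have hm0 : m = 0 := by
      simp at h
      rcases h with h | h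
      · omega
      · omega
    subst hm0
    simp
  · rw [if_neg (by omega), if_pos h, if_neg (by omega), if_pos h]
    ring

lemma ds_eq (b c : ℕ) (hb : 0 < b) (hc : 0 < c) (hco : Nat.Coprime b c) :
    ∑ k ∈ range c, sawtooth ((k:ℚ)/c) * sawtooth ((b*k:ℚ)/c)
      = (∑ k ∈ range c, (k:ℚ)*((b*k % c :ℕ):ℚ))/(c:ℚ)^2 - ((c:ℚ)-1)/2 + (c:ℚ)/4 := by
  have hcq : (c:ℚ) ≠ 0 := by positivity
  have e : ∀ k ∈ range c, sawtooth ((k:ℚ)/c) * sawtooth ((b*k:ℚ)/c)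
      = (1/(c:ℚ)^2)*((k:ℚ)*((b*k % c :ℕ):ℚ)) - (1/(2*(c:ℚ)))*(k:ℚ)
        - (1/(2*(c:ℚ)))*((b*k % c :ℕ):ℚ) + 1/4 := by
    intro k hk
    rw [saw_lt k c (mem_range.1 hk)]
    have e2 : ((b*k:ℚ)) = ((b*k : ℕ):ℚ) := by push_cast; ring
    rw [e2, saw_nat_div (b*k) c hc]
    field_simp
    ring
  rw [Finset.sum_congr rfl e]
  simp only [Finset.sum_add_distrib, Finset.sum_sub_distrib, ← Finset.mul_sum]
  rw [sum_cast_range, sum_mulmod b c hc hco (fun m => ((m:ℕ):ℚ)), sum_cast_range,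
    Finset.sum_const, card_range, nsmul_eq_mul]
  field_simp
  ring

lemma saw_reciprocity (b c : ℕ) (hb : 0 < b) (hc : 0 < c) (hco : Nat.Coprime b c) :
    (∑ k ∈ range c, sawtooth ((k:ℚ)/c) * sawtooth ((b*k:ℚ)/c))
    + (∑ k ∈ range b, sawtooth ((k:ℚ)/b) * sawtooth ((c*k:ℚ)/b))
    = 1/4 + (1/12)*((b:ℚ)/c + (c:ℚ)/b + 1/((b:ℚ)*c)) := by
  have hbq : (b:ℚ) ≠ 0 := by positivity
  have hcq : (c:ℚ) ≠ 0 := by positivity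
  have hsum : ∑ j ∈ range c, ∑ m ∈ range b,
      ((if c*m < b*j then ((b*j:ℚ)) else 0) + (if b*j < c*m then ((c*m:ℚ)) else 0))
      = ∑ j ∈ range c, ∑ m ∈ range b,
      (((b*j:ℚ) + (c*m:ℚ))/2
        + (if c*m < b*j then ((b*j:ℚ) - (c*m:ℚ)) else 0)/2
        + (if b*j < c*m then ((c*m:ℚ) - (b*j:ℚ)) else 0)/2) := by
    refine Finset.sum_congr rfl (fun j hj => Finset.sum_congr rfl (fun m hm => ?_))
    exact pairwise_max b c j m hco (mem_range.1 hj) (mem_range.1 hm)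
  simp only [Finset.sum_add_distrib, ← Finset.sum_div] at hsum
  rw [Finset.sum_comm (f := fun j m => (if b*j < c*m then ((c*m:ℚ)) else 0))] at hsum
  rw [Finset.sum_comm (f := fun j m => (if b*j < c*m then ((c*m:ℚ) - (b*j:ℚ)) else 0))] at hsum
  have hF1 : 4*(c:ℚ)^2*(∑ k ∈ range c, sawtooth ((k:ℚ)/c) * sawtooth ((b*k:ℚ)/c))
      = 4*(∑ k ∈ range c, (k:ℚ)*((b*k % c :ℕ):ℚ)) - 2*(c:ℚ)^2*((c:ℚ)-1) + (c:ℚ)^3 := by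
    rw [ds_eq b c hb hc hco]; field_simp; ring
  have hF2 : 4*(b:ℚ)^2*(∑ k ∈ range b, sawtooth ((k:ℚ)/b) * sawtooth ((c*k:ℚ)/b))
      = 4*(∑ k ∈ range b, (k:ℚ)*((c*k % b :ℕ):ℚ)) - 2*(b:ℚ)^2*((b:ℚ)-1) + (b:ℚ)^3 := by
    rw [ds_eq c b hc hb hco.symm]; field_simp; ring
  have hF3 : 6*(c:ℚ)*(∑ j ∈ range c, ∑ m ∈ range b, (if c*m < b*j then ((b*j:ℚ)) else 0))
      = (b:ℚ)^2*((c:ℚ)*((c:ℚ)-1)*(2*(c:ℚ)-1)) - 6*(b:ℚ)*(∑ k ∈ range c, (k:ℚ)*((b*k % c :ℕ):ℚ))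
        + 3*(b:ℚ)*(c:ℚ)^2*((c:ℚ)-1) := by
    rw [W_eval b c hb hc hco]; field_simp; ring
  have hF4 : 6*(b:ℚ)*(∑ j ∈ range b, ∑ m ∈ range c, (if b*m < c*j then ((c*j:ℚ)) else 0))
      = (c:ℚ)^2*((b:ℚ)*((b:ℚ)-1)*(2*(b:ℚ)-1)) - 6*(c:ℚ)*(∑ k ∈ range b, (k:ℚ)*((c*k % b :ℕ):ℚ))
        + 3*(c:ℚ)*(b:ℚ)^2*((b:ℚ)-1) := by
    rw [W_eval c b hc hb hco.symm]; field_simp; ring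
  have hF6 : 12*(c:ℚ)*(∑ j ∈ range c, ∑ m ∈ range b, (if c*m < b*j then ((b*j:ℚ) - (c*m:ℚ)) else 0))
      = ((b:ℚ)^2-1)*((c:ℚ)*((c:ℚ)-1)*(2*(c:ℚ)-1)) + 3*((b:ℚ)+1)*(c:ℚ)^2*((c:ℚ)-1) := by
    rw [A_eval b c hb hc hco]; field_simp; ring
  have hF7 : 12*(b:ℚ)*(∑ j ∈ range b, ∑ m ∈ range c, (if b*m < c*j then ((c*j:ℚ) - (b*m:ℚ)) else 0))
      = ((c:ℚ)^2-1)*((b:ℚ)*((b:ℚ)-1)*(2*(b:ℚ)-1)) + 3*((c:ℚ)+1)*(b:ℚ)^2*((b:ℚ)-1) := by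
    rw [A_eval c b hc hb hco.symm]; field_simp; ring
  have hF8 : ∑ j ∈ range c, ∑ m ∈ range b, ((b:ℚ)*(j:ℚ)) = (b:ℚ)^2*((c:ℚ)*((c:ℚ)-1)/2) := by
    have e : ∀ j ∈ range c, ∑ m ∈ range b, ((b:ℚ)*(j:ℚ)) = (b:ℚ)*((b:ℚ)*(j:ℚ)) := by
      intro j _
      rw [Finset.sum_const, card_range, nsmul_eq_mul]
    rw [Finset.sum_congr rfl e]
    simp only [← Finset.mul_sum]
    rw [sum_cast_range]
    ring
  have hF9 : ∑ j ∈ range c, ∑ m ∈ range b, ((c:ℚ)*(m:ℚ)) = (c:ℚ)^2*((b:ℚ)*((b:ℚ)-1)/2) := by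
    have e : ∀ j ∈ range c, ∑ m ∈ range b, ((c:ℚ)*(m:ℚ)) = (c:ℚ)*((b:ℚ)*((b:ℚ)-1)/2) := by
      intro j _
      rw [← Finset.mul_sum, sum_cast_range]
    rw [Finset.sum_congr rfl e, Finset.sum_const, card_range, nsmul_eq_mul]
    ring
  have h48 : ((48:ℚ)*(b:ℚ)^2*(c:ℚ)^2) ≠ 0 := by positivity
  apply mul_left_cancel₀ h48
  have Gpoly : (48:ℚ)*(b:ℚ)^2*(c:ℚ)^2*((∑ k ∈ range c, sawtooth ((k:ℚ)/c) * sawtooth ((b*k:ℚ)/c))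
      + (∑ k ∈ range b, sawtooth ((k:ℚ)/b) * sawtooth ((c*k:ℚ)/b)))
      = 12*(b:ℚ)^2*(c:ℚ)^2 + 4*(b:ℚ)^3*(c:ℚ) + 4*(b:ℚ)*(c:ℚ)^3 + 4*(b:ℚ)*(c:ℚ) := by
    linear_combination 12*(b:ℚ)^2*hF1 + 12*(c:ℚ)^2*hF2 + 8*(b:ℚ)*hF3 + 8*(c:ℚ)*hF4
      - 48*(b:ℚ)*(c:ℚ)*hsum - 2*(b:ℚ)*hF6 - 2*(c:ℚ)*hF7
      - 24*(b:ℚ)*(c:ℚ)*hF8 - 24*(b:ℚ)*(c:ℚ)*hF9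
  rw [Gpoly]
  field_simp
  ring

def triF (c₁ c₂ : ℕ) (s : ℤ) : Finset (ℕ × ℕ) :=
  (range (s.toNat+1) ×ˢ range (s.toNat+1)).filter (fun n => (c₁:ℤ)*n.1 + (c₂:ℤ)*n.2 ≤ s)

def lineF (c₁ c₂ : ℕ) (s : ℤ) : Finset (ℕ × ℕ) :=
  (range (s.toNat+1) ×ˢ range (s.toNat+1)).filter (fun n => (c₁:ℤ)*n.1 + (c₂:ℤ)*n.2 = s)

lemma triF_eq (c₁ c₂ : ℕ) (hc₁ : 0 < c₁) (hc₂ : 0 < c₂) (s : ℤ) (A : ℕ) (hA : s.toNat + 1 ≤ A) :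
    ((range A ×ˢ range A).filter (fun n => (c₁:ℤ)*n.1 + (c₂:ℤ)*n.2 ≤ s)) = triF c₁ c₂ s := by
  ext n
  simp only [triF, mem_filter, mem_product, mem_range]
  have h1 : (n.1:ℤ) ≤ (c₁:ℤ)*n.1 := le_mul_of_one_le_left (by positivity) (by exact_mod_cast hc₁)
  have h2 : (n.2:ℤ) ≤ (c₂:ℤ)*n.2 := le_mul_of_one_le_left (by positivity) (by exact_mod_cast hc₂)
  have h3 : 0 ≤ (c₁:ℤ)*n.1 := by positivity
  have h4 : 0 ≤ (c₂:ℤ)*n.2 := by positivity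
  constructor
  · rintro ⟨⟨hb1, hb2⟩, hle⟩
    exact ⟨⟨by omega, by omega⟩, hle⟩
  · rintro ⟨⟨hb1, hb2⟩, hle⟩
    exact ⟨⟨by omega, by omega⟩, hle⟩

lemma triF_succ (c₁ c₂ : ℕ) (hc₁ : 0 < c₁) (hc₂ : 0 < c₂) (s : ℤ) :
    (triF c₁ c₂ s).card = (triF c₁ c₂ (s-1)).card + (lineF c₁ c₂ s).card := by
  classical
  have hsplit : triF c₁ c₂ s
      = ((range (s.toNat+1) ×ˢ range (s.toNat+1)).filter
          (fun n => (c₁:ℤ)*n.1 + (c₂:ℤ)*n.2 ≤ s - 1)) ∪ lineF c₁ c₂ s := by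
    rw [triF, lineF, ← Finset.filter_or]
    apply Finset.filter_congr
    intro n _
    constructor
    · intro h; omega
    · intro h; omega
  have hdisj : Disjoint ((range (s.toNat+1) ×ˢ range (s.toNat+1)).filter
          (fun n => (c₁:ℤ)*n.1 + (c₂:ℤ)*n.2 ≤ s - 1)) (lineF c₁ c₂ s) := by
    rw [Finset.disjoint_left]
    intro n hn hn'
    rw [mem_filter] at hn
    rw [lineF, mem_filter] at hn'
    omega
  rw [hsplit, Finset.card_union_of_disjoint hdisj,
    triF_eq c₁ c₂ hc₁ hc₂ (s-1) (s.toNat+1) (by omega)]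

lemma triF_base (c₁ c₂ : ℕ) (hc₁ : 0 < c₁) (hc₂ : 0 < c₂) :
    (triF c₁ c₂ 0).card = 1 := by
  have : triF c₁ c₂ 0 = {(0,0)} := by
    ext n
    simp only [triF, mem_filter, mem_product, mem_range, Finset.mem_singleton]
    have h3 : 0 ≤ (c₁:ℤ)*n.1 := by positivity
    have h4 : 0 ≤ (c₂:ℤ)*n.2 := by positivity
    have h1 : (n.1:ℤ) ≤ (c₁:ℤ)*n.1 := le_mul_of_one_le_left (by positivity) (by exact_mod_cast hc₁)
    have h2 : (n.2:ℤ) ≤ (c₂:ℤ)*n.2 := le_mul_of_one_le_left (by positivity) (by exact_mod_cast hc₂)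
    constructor
    · rintro ⟨-, hle⟩
      have hn1 : n.1 = 0 := by omega
      have hn2 : n.2 = 0 := by omega
      exact Prod.ext hn1 hn2
    · rintro rfl
      norm_num
  rw [this, Finset.card_singleton]

lemma line_card (c₁ c₂ : ℕ) (hc₁ : 0 < c₁) (hc₂ : 0 < c₂) (hco : Nat.Coprime c₁ c₂)
    (s u : ℤ) (k₁ : ℕ) (hk₁ : k₁ < c₁) (hu : s - (c₂:ℤ)*k₁ = (c₁:ℤ)*u) :
    (lineF c₁ c₂ s).card = (u / (c₂:ℤ) + 1).toNat := by
  classical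
  have hco' : IsCoprime (c₁:ℤ) (c₂:ℤ) := Int.isCoprime_iff_gcd_eq_one.2 (by exact_mod_cast hco)
  have hc₁z : (0:ℤ) < c₁ := by exact_mod_cast hc₁
  have hc₂z : (0:ℤ) < c₂ := by exact_mod_cast hc₂
  have himg : lineF c₁ c₂ s
      = (range ((u / (c₂:ℤ) + 1).toNat)).image
          (fun j : ℕ => (((u - (c₂:ℤ)*(j:ℤ)).toNat : ℕ), (k₁ + c₁*j : ℕ))) := by
    ext n
    simp only [lineF, mem_filter, mem_product, mem_range, Finset.mem_image]
    constructor
    · rintro ⟨⟨hb1, hb2⟩, heq⟩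
      have hdvd : (c₁:ℤ) ∣ (c₂:ℤ)*((n.2:ℤ) - k₁) :=
        ⟨u - n.1, by linear_combination heq + hu⟩
      have hdvd2 : (c₁:ℤ) ∣ ((n.2:ℤ) - k₁) := hco'.dvd_of_dvd_mul_left hdvd
      obtain ⟨t, ht⟩ := hdvd2
      have htnn : 0 ≤ t := by
        by_contra hneg
        push_neg at hneg
        have h5 : (c₁:ℤ)*t ≤ (c₁:ℤ)*(-1) := mul_le_mul_of_nonneg_left (by omega) (by positivity)
        have h6 : (0:ℤ) ≤ n.2 := by positivity
        have h7 : (k₁:ℤ) < c₁ := by exact_mod_cast hk₁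
        omega
      have hn1 : (c₁:ℤ)*(n.1:ℤ) = (c₁:ℤ)*(u - (c₂:ℤ)*t) := by
        linear_combination heq + hu - (c₂:ℤ) * ht
      have hn1' : (n.1:ℤ) = u - (c₂:ℤ)*t := mul_left_cancel₀ (by positivity) hn1
      refine ⟨t.toNat, ?_, ?_⟩
      · have h8 : (c₂:ℤ)*t ≤ u := by
          have : (0:ℤ) ≤ n.1 := by positivity
          omega
        have h9 : t ≤ u / (c₂:ℤ) := (Int.le_ediv_iff_mul_le hc₂z).2 (by linarith [h8])
        omega
      · have htq : ((t.toNat:ℕ):ℤ) = t := Int.toNat_of_nonneg htnn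
        have e2 : ((k₁ + c₁*t.toNat : ℕ):ℤ) = (n.2:ℤ) := by
          push_cast [htq]
          omega
        have e1 : ((u - (c₂:ℤ)*(t.toNat:ℕ)).toNat : ℤ) = (n.1:ℤ) := by
          rw [show ((t.toNat:ℕ):ℤ) = t from htq] at *
          omega
        have e1' : (u - (c₂:ℤ)*(t.toNat:ℕ)).toNat = n.1 := by exact_mod_cast e1
        have e2' : k₁ + c₁*t.toNat = n.2 := by exact_mod_cast e2
        exact Prod.ext e1' e2'
    · rintro ⟨j, hj, rfl⟩
      have hjz : (j:ℤ) < u / (c₂:ℤ) + 1 := by omega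
      have hjle : (j:ℤ)*(c₂:ℤ) ≤ u := (Int.le_ediv_iff_mul_le hc₂z).1 (by omega)
      have hnn : (0:ℤ) ≤ u - (c₂:ℤ)*j := by nlinarith
      have hn1 : ((u - (c₂:ℤ)*j).toNat : ℤ) = u - (c₂:ℤ)*j := Int.toNat_of_nonneg hnn
      have heq : (c₁:ℤ)*((u - (c₂:ℤ)*j).toNat : ℤ) + (c₂:ℤ)*((k₁ + c₁*j : ℕ):ℤ) = s := by
        rw [hn1]
        push_cast
        linear_combination -hu
      have hk₁z : (k₁:ℤ) < c₁ := by exact_mod_cast hk₁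
      have hp1 : ((u - (c₂:ℤ)*j).toNat : ℤ) ≤ (c₁:ℤ)*((u - (c₂:ℤ)*j).toNat : ℤ) :=
        le_mul_of_one_le_left (by positivity) (by omega)
      have hp2 : ((k₁ + c₁*j:ℕ):ℤ) ≤ (c₂:ℤ)*((k₁ + c₁*j:ℕ):ℤ) :=
        le_mul_of_one_le_left (by positivity) (by omega)
      have hp3 : (0:ℤ) ≤ (c₁:ℤ)*((u - (c₂:ℤ)*j).toNat : ℤ) := by positivity
      have hp4 : (0:ℤ) ≤ (c₂:ℤ)*((k₁ + c₁*j:ℕ):ℤ) := by positivity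
      refine ⟨⟨?_, ?_⟩, heq⟩
      · omega
      · omega
  rw [himg, Finset.card_image_of_injective _ ?_, card_range]
  intro a b hab
  have := congrArg Prod.snd hab
  simp only at this
  have : c₁ * a = c₁ * b := by omega
  exact Nat.eq_of_mul_eq_mul_left hc₁ this

lemma exists_res (c₁ c₂ : ℕ) (hc₁ : 0 < c₁) (hco : Nat.Coprime c₁ c₂) (s : ℤ) :
    ∃ k : ℕ, k < c₁ ∧ (c₁:ℤ) ∣ s - (c₂:ℤ)*k := by
  haveI : NeZero c₁ := ⟨hc₁.ne'⟩
  have hu : IsUnit ((c₂ : ZMod c₁)) := (ZMod.isUnit_iff_coprime c₂ c₁).2 (Nat.coprime_comm.1 hco)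
  refine ⟨(((c₂ : ZMod c₁))⁻¹ * ((s : ZMod c₁))).val, ZMod.val_lt _, ?_⟩
  rw [← ZMod.intCast_zmod_eq_zero_iff_dvd]
  push_cast
  rw [ZMod.natCast_val, ZMod.cast_id]
  rw [← mul_assoc, ZMod.mul_inv_of_unit _ hu, one_mul]
  ring

lemma sum_ite_dvd (c₁ c₂ : ℕ) (hc₁ : 0 < c₁) (hco : Nat.Coprime c₁ c₂) (s : ℤ)
    (k₁ : ℕ) (hk₁ : k₁ < c₁) (hd₁ : (c₁:ℤ) ∣ s - (c₂:ℤ)*k₁) (g : ℕ → ℚ) :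
    ∑ k ∈ range c₁, (if (c₁:ℤ) ∣ (s - (c₂:ℤ)*k) then g k else 0) = g k₁ := by
  have hco' : IsCoprime (c₁:ℤ) (c₂:ℤ) := Int.isCoprime_iff_gcd_eq_one.2 (by exact_mod_cast hco)
  rw [Finset.sum_eq_single_of_mem k₁ (mem_range.2 hk₁), if_pos hd₁]
  intro b hb hbne
  rw [if_neg]
  intro hdb
  have hdvd : (c₁:ℤ) ∣ (c₂:ℤ)*((b:ℤ) - k₁) := by
    have h5 := Int.dvd_sub hd₁ hdb
    rwa [show (s - (c₂:ℤ)*k₁) - (s - (c₂:ℤ)*b) = (c₂:ℤ)*((b:ℤ) - k₁) by ring] at h5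
  have hdvd2 : (c₁:ℤ) ∣ ((b:ℤ) - k₁) := hco'.dvd_of_dvd_mul_left hdvd
  obtain ⟨w, hw⟩ := hdvd2
  have hbz : (b:ℤ) < c₁ := by exact_mod_cast mem_range.1 hb
  have hk₁z : (k₁:ℤ) < c₁ := by exact_mod_cast hk₁
  have hw0 : w = 0 := by
    rcases lt_trichotomy w 0 with h|h|h
    · have : (c₁:ℤ)*w ≤ (c₁:ℤ)*(-1) := mul_le_mul_of_nonneg_left (by omega) (by positivity)
      omega
    · exact h
    · have : (c₁:ℤ)*1 ≤ (c₁:ℤ)*w := mul_le_mul_of_nonneg_left (by omega) (by positivity)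
      omega
  rw [hw0, mul_zero] at hw
  have : b = k₁ := by omega
  exact hbne this

lemma saw_step (m : ℤ) (c : ℕ) (hc : 0 < c) :
    sawtooth ((m:ℚ)/c) = sawtooth (((m - 1 : ℤ):ℚ)/c) + 1/c
      - (if (c:ℤ) ∣ m then (1:ℚ) else 0) := by
  have hcz : (0:ℤ) < c := by exact_mod_cast hc
  have hcq : (c:ℚ) ≠ 0 := by positivity
  rw [saw_int_div m c hc, saw_int_div (m-1) c hc]
  by_cases h : (c:ℤ) ∣ m
  · rw [if_pos h]
    obtain ⟨w, rfl⟩ := h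
    have h1 : ((c:ℤ)*w) % c = 0 := Int.mul_emod_right _ _
    have h2 : ((c:ℤ)*w - 1) % c = c - 1 := by
      rw [show (c:ℤ)*w - 1 = (c - 1) + c*(w-1) by ring, Int.add_mul_emod_self_left,
        Int.emod_eq_of_lt (by omega) (by omega)]
    rw [h1, h2]
    push_cast
    field_simp
    ring
  · rw [if_neg h]
    have h1 : m % c ≠ 0 := fun hh => h (Int.dvd_of_emod_eq_zero hh)
    have h2 : 0 ≤ m % c := Int.emod_nonneg m (by omega)
    have h3 : m % c < c := Int.emod_lt_of_pos m hcz
    have h4 : (m - 1) % c = m % c - 1 := by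
      rw [show m - 1 = (m % c - 1) + c*(m/c) by linarith [Int.emod_add_mul_ediv m c],
        Int.add_mul_emod_self_left, Int.emod_eq_of_lt (by omega) (by omega)]
    rw [h4]
    push_cast
    field_simp
    ring

lemma saw_neg_of_not_dvd (m : ℤ) (c : ℕ) (hc : 0 < c) (h : ¬ (c:ℤ) ∣ m) :
    sawtooth ((-(m:ℚ))/c) = - sawtooth ((m:ℚ)/c) := by
  have hcz : (0:ℤ) < c := by exact_mod_cast hc
  have hcq : (c:ℚ) ≠ 0 := by positivity
  have e : (-(m:ℚ))/c = (((-m : ℤ)):ℚ)/c := by push_cast; ring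
  rw [e, saw_int_div (-m) c hc, saw_int_div m c hc]
  have h1 : m % c ≠ 0 := fun hh => h (Int.dvd_of_emod_eq_zero hh)
  have h2 : 0 ≤ m % c := Int.emod_nonneg m (by omega)
  have h3 : m % c < c := Int.emod_lt_of_pos m hcz
  have h4 : (-m) % c = c - m % c := by
    rw [show -m = (c - m % c) + c*(-(m/c) - 1) by linarith [Int.emod_add_mul_ediv m c],
      Int.add_mul_emod_self_left, Int.emod_eq_of_lt (by omega) (by omega)]
  rw [h4]
  push_cast
  field_simp
  ring

lemma line_card_q (c₁ c₂ : ℕ) (hc₁ : 0 < c₁) (hc₂ : 0 < c₂) (hco : Nat.Coprime c₁ c₂)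
    (s : ℤ) (hs : 1 - (c₁:ℤ) - (c₂:ℤ) ≤ s) (k₁ k₂ : ℕ)
    (hk₁ : k₁ < c₁) (hd₁ : (c₁:ℤ) ∣ s - (c₂:ℤ)*k₁)
    (hk₂ : k₂ < c₂) (hd₂ : (c₂:ℤ) ∣ s - (c₁:ℤ)*k₂) :
    ((lineF c₁ c₂ s).card : ℚ)
      = (s:ℚ)/((c₁:ℚ)*c₂) + 1 - (k₁:ℚ)/c₁ - (k₂:ℚ)/c₂ := by
  have hc₁z : (0:ℤ) < c₁ := by exact_mod_cast hc₁
  have hc₂z : (0:ℤ) < c₂ := by exact_mod_cast hc₂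
  have hc₁q : (c₁:ℚ) ≠ 0 := by positivity
  have hc₂q : (c₂:ℚ) ≠ 0 := by positivity
  have hco' : IsCoprime (c₂:ℤ) (c₁:ℤ) := Int.isCoprime_iff_gcd_eq_one.2
    (by rw [Int.gcd_natCast_natCast]; exact hco.symm)
  obtain ⟨u, hu⟩ := hd₁
  have hu' : s - (c₂:ℤ)*k₁ = (c₁:ℤ)*u := hu
  rw [line_card c₁ c₂ hc₁ hc₂ hco s u k₁ hk₁ hu']
  obtain ⟨w, hw⟩ := hd₂
  -- c₂ ∣ u - k₂
  have hdd : (c₂:ℤ) ∣ (c₁:ℤ)*(u - k₂) := ⟨w - k₁, by linear_combination hw - hu⟩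
  obtain ⟨v, hv⟩ := hco'.dvd_of_dvd_mul_left hdd
  have hk₂z : (k₂:ℤ) < c₂ := by exact_mod_cast hk₂
  have hk₁z : (k₁:ℤ) < c₁ := by exact_mod_cast hk₁
  have huq : (s:ℚ) - (c₂:ℚ)*k₁ = (c₁:ℚ)*u := by exact_mod_cast hu'
  have hvq : (u:ℚ) - (k₂:ℚ) = (c₂:ℚ)*v := by exact_mod_cast hv
  rcases le_or_gt 0 u with hunn | huneg
  · -- u ≥ 0 : v ≥ 0 and card = v + 1
    have hv0 : 0 ≤ v := by
      by_contra hneg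
      push_neg at hneg
      have : (c₂:ℤ)*v ≤ (c₂:ℤ)*(-1) := mul_le_mul_of_nonneg_left (by omega) (by positivity)
      omega
    have hdivv : u / (c₂:ℤ) = v := by
      rw [show u = (k₂:ℤ) + v*(c₂:ℤ) by linarith [hv]]
      rw [Int.add_mul_ediv_right _ _ (by omega), Int.ediv_eq_zero_of_lt (by omega) hk₂z]
      omega
    have hsq : (s:ℚ) = (c₁:ℚ)*c₂*v + (c₁:ℚ)*k₂ + (c₂:ℚ)*k₁ := by
      linear_combination huq + (c₁:ℚ)*hvq
    have hvt : ((v.toNat:ℕ):ℚ) = ((v:ℤ):ℚ) := by exact_mod_cast congrArg (fun z : ℤ => (z:ℚ)) (Int.toNat_of_nonneg hv0)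
    rw [hdivv, show (v + 1).toNat = v.toNat + 1 by omega]
    push_cast
    rw [hvt, hsq]
    field_simp
    ring
  · -- u < 0 : card = 0 and RHS = 0
    have hub : -(c₂:ℤ) ≤ u := by
      by_contra hneg
      push_neg at hneg
      have h5 : (c₁:ℤ)*u ≤ (c₁:ℤ)*(-(c₂:ℤ)-1) := mul_le_mul_of_nonneg_left (by omega) (by positivity)
      have h6 : (c₁:ℤ)*(-(c₂:ℤ)-1) = -((c₁:ℤ)*(c₂:ℤ)) - c₁ := by ring
      have h7 : (c₂:ℤ)*k₁ ≤ (c₂:ℤ)*((c₁:ℤ)-1) := mul_le_mul_of_nonneg_left (by omega) (by positivity)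
      have h8 : (c₂:ℤ)*((c₁:ℤ)-1) = (c₁:ℤ)*(c₂:ℤ) - c₂ := by ring
      omega
    have hveq : v = -1 := by
      have hA : (c₂:ℤ)*v ≤ -1 := by omega
      have hB : -2*(c₂:ℤ) + 1 ≤ (c₂:ℤ)*v := by omega
      have hv1 : v ≤ -1 := by
        by_contra hng
        push_neg at hng
        have : 0 ≤ (c₂:ℤ)*v := mul_nonneg (by positivity) (by omega)
        omega
      have hv2 : -1 ≤ v := by
        by_contra hng
        push_neg at hng
        have : (c₂:ℤ)*v ≤ (c₂:ℤ)*(-2) := mul_le_mul_of_nonneg_left (by omega) (by positivity)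
        omega
      omega
    have hdivv : u / (c₂:ℤ) = -1 := by
      rw [show u = ((c₂:ℤ) + u) + (-1)*(c₂:ℤ) by ring]
      rw [Int.add_mul_ediv_right _ _ (by omega), Int.ediv_eq_zero_of_lt (by omega) (by omega)]
      omega
    rw [hdivv]
    norm_num
    have huval : (u:ℚ) = (k₂:ℚ) - c₂ := by
      have hcv : (c₂:ℤ)*v = -(c₂:ℤ) := by rw [hveq]; ring
      have : (u:ℤ) = (k₂:ℤ) - c₂ := by omega
      exact_mod_cast this
    have hsq : (s:ℚ) = (c₁:ℚ)*k₂ - (c₁:ℚ)*c₂ + (c₂:ℚ)*k₁ := by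
      linear_combination huq + (c₁:ℚ)*huval
    rw [hsq]
    field_simp
    ring

noncomputable def Fq (c₁ c₂ : ℕ) (s : ℤ) : ℚ :=
  (s:ℚ)^2/(2*(c₁:ℚ)*(c₂:ℚ)) + (s:ℚ)/2*(1/(c₁:ℚ) + 1/(c₂:ℚ) + 1/((c₁:ℚ)*(c₂:ℚ))) + 1/4
  + (1/12)*((c₁:ℚ)/(c₂:ℚ) + (c₂:ℚ)/(c₁:ℚ) + 1/((c₁:ℚ)*(c₂:ℚ)))
  + ∑ k ∈ range c₁, sawtooth (((s:ℚ) - (c₂:ℚ)*k)/(c₁:ℚ)) * sawtooth ((k:ℚ)/(c₁:ℚ))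
  + ∑ k ∈ range c₂, sawtooth (((s:ℚ) - (c₁:ℚ)*k)/(c₂:ℚ)) * sawtooth ((k:ℚ)/(c₂:ℚ))

lemma Fq_step (c₁ c₂ : ℕ) (hc₁ : 0 < c₁) (hc₂ : 0 < c₂) (hco : Nat.Coprime c₁ c₂) (s : ℤ)
    (k₁ k₂ : ℕ) (hk₁ : k₁ < c₁) (hd₁ : (c₁:ℤ) ∣ s - (c₂:ℤ)*k₁)
    (hk₂ : k₂ < c₂) (hd₂ : (c₂:ℤ) ∣ s - (c₁:ℤ)*k₂) :
    Fq c₁ c₂ s - Fq c₁ c₂ (s-1) = (s:ℚ)/((c₁:ℚ)*c₂) + 1 - (k₁:ℚ)/c₁ - (k₂:ℚ)/c₂ := by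
  have hD1 : (∑ k ∈ range c₁, sawtooth (((s:ℚ) - (c₂:ℚ)*k)/(c₁:ℚ)) * sawtooth ((k:ℚ)/(c₁:ℚ)))
      - (∑ k ∈ range c₁, sawtooth ((((s-1:ℤ):ℚ) - (c₂:ℚ)*k)/(c₁:ℚ)) * sawtooth ((k:ℚ)/(c₁:ℚ)))
      = -(1/(2*(c₁:ℚ))) + 1/2 - (k₁:ℚ)/(c₁:ℚ) := by
    rw [← Finset.sum_sub_distrib]
    have e : ∀ k ∈ range c₁,
        sawtooth (((s:ℚ) - (c₂:ℚ)*k)/(c₁:ℚ)) * sawtooth ((k:ℚ)/(c₁:ℚ))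
          - sawtooth ((((s-1:ℤ):ℚ) - (c₂:ℚ)*k)/(c₁:ℚ)) * sawtooth ((k:ℚ)/(c₁:ℚ))
        = (1/(c₁:ℚ))*sawtooth ((k:ℚ)/(c₁:ℚ))
          - (if (c₁:ℤ) ∣ (s - (c₂:ℤ)*k) then sawtooth ((k:ℚ)/(c₁:ℚ)) else 0) := by
      intro k hk
      have h1 : ((s:ℚ) - (c₂:ℚ)*k)/(c₁:ℚ) = (((s - (c₂:ℤ)*k : ℤ)):ℚ)/(c₁:ℚ) := by
        push_cast; ring
      have h2 : (((s-1:ℤ):ℚ) - (c₂:ℚ)*k)/(c₁:ℚ) = ((((s - (c₂:ℤ)*k) - 1 : ℤ)):ℚ)/(c₁:ℚ) := by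
        push_cast; ring
      rw [h1, h2, saw_step (s - (c₂:ℤ)*k) c₁ hc₁]
      split_ifs with h
      · ring
      · ring
    rw [Finset.sum_congr rfl e, Finset.sum_sub_distrib, ← Finset.mul_sum, sum_saw_range c₁ hc₁,
      sum_ite_dvd c₁ c₂ hc₁ hco s k₁ hk₁ hd₁ (fun k => sawtooth ((k:ℚ)/(c₁:ℚ))),
      saw_lt k₁ c₁ hk₁]
    ring
  have hD2 : (∑ k ∈ range c₂, sawtooth (((s:ℚ) - (c₁:ℚ)*k)/(c₂:ℚ)) * sawtooth ((k:ℚ)/(c₂:ℚ)))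
      - (∑ k ∈ range c₂, sawtooth ((((s-1:ℤ):ℚ) - (c₁:ℚ)*k)/(c₂:ℚ)) * sawtooth ((k:ℚ)/(c₂:ℚ)))
      = -(1/(2*(c₂:ℚ))) + 1/2 - (k₂:ℚ)/(c₂:ℚ) := by
    rw [← Finset.sum_sub_distrib]
    have e : ∀ k ∈ range c₂,
        sawtooth (((s:ℚ) - (c₁:ℚ)*k)/(c₂:ℚ)) * sawtooth ((k:ℚ)/(c₂:ℚ))
          - sawtooth ((((s-1:ℤ):ℚ) - (c₁:ℚ)*k)/(c₂:ℚ)) * sawtooth ((k:ℚ)/(c₂:ℚ))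
        = (1/(c₂:ℚ))*sawtooth ((k:ℚ)/(c₂:ℚ))
          - (if (c₂:ℤ) ∣ (s - (c₁:ℤ)*k) then sawtooth ((k:ℚ)/(c₂:ℚ)) else 0) := by
      intro k hk
      have h1 : ((s:ℚ) - (c₁:ℚ)*k)/(c₂:ℚ) = (((s - (c₁:ℤ)*k : ℤ)):ℚ)/(c₂:ℚ) := by
        push_cast; ring
      have h2 : (((s-1:ℤ):ℚ) - (c₁:ℚ)*k)/(c₂:ℚ) = ((((s - (c₁:ℤ)*k) - 1 : ℤ)):ℚ)/(c₂:ℚ) := by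
        push_cast; ring
      rw [h1, h2, saw_step (s - (c₁:ℤ)*k) c₂ hc₂]
      split_ifs with h
      · ring
      · ring
    rw [Finset.sum_congr rfl e, Finset.sum_sub_distrib, ← Finset.mul_sum, sum_saw_range c₂ hc₂,
      sum_ite_dvd c₂ c₁ hc₂ hco.symm s k₂ hk₂ hd₂ (fun k => sawtooth ((k:ℚ)/(c₂:ℚ))),
      saw_lt k₂ c₂ hk₂]
    ring
  unfold Fq
  push_cast at hD1 hD2 ⊢
  linear_combination hD1 + hD2

lemma neg_ds (b c : ℕ) (hc : 0 < c) (hco : Nat.Coprime b c) :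
    ∑ k ∈ range c, sawtooth (((0:ℚ) - (b:ℚ)*k)/(c:ℚ)) * sawtooth ((k:ℚ)/(c:ℚ))
      = 1/2 - ∑ k ∈ range c, sawtooth ((k:ℚ)/(c:ℚ)) * sawtooth ((b*k:ℚ)/(c:ℚ)) := by
  have key : ∑ k ∈ range c,
      (sawtooth (((0:ℚ) - (b:ℚ)*k)/(c:ℚ)) * sawtooth ((k:ℚ)/(c:ℚ))
        + sawtooth ((k:ℚ)/(c:ℚ)) * sawtooth ((b*k:ℚ)/(c:ℚ))) = 1/2 := by
    rw [Finset.sum_eq_single_of_mem 0 (mem_range.2 hc)]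
    · have h0 : sawtooth (0:ℚ) = -(1/2) := by unfold sawtooth; norm_num
      norm_num [h0]
    · intro k hk hkne
      have hkpos : 0 < k := Nat.pos_of_ne_zero hkne
      have hklt : k < c := mem_range.1 hk
      have hnd : ¬ ((c:ℤ) ∣ ((b*k : ℕ):ℤ)) := by
        rw [Int.natCast_dvd_natCast]
        intro hdvd
        have : c ∣ k := Nat.Coprime.dvd_of_dvd_mul_left (Nat.coprime_comm.1 hco) hdvd
        have := Nat.le_of_dvd hkpos this
        omega
      have harg : ((0:ℚ) - (b:ℚ)*(k:ℚ))/(c:ℚ) = (-(((b*k:ℕ):ℤ):ℚ))/(c:ℚ) := by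
        push_cast; ring
      have harg2 : ((((b*k:ℕ):ℤ)):ℚ)/(c:ℚ) = ((b*k:ℚ))/(c:ℚ) := by
        push_cast; ring
      rw [harg, saw_neg_of_not_dvd ((b*k:ℕ):ℤ) c hc hnd, harg2]
      ring
  rw [Finset.sum_add_distrib] at key
  linarith [key]

lemma Fq_base (c₁ c₂ : ℕ) (hc₁ : 0 < c₁) (hc₂ : 0 < c₂) (hco : Nat.Coprime c₁ c₂) :
    Fq c₁ c₂ 0 = 1 := by
  unfold Fq
  have h1 := neg_ds c₂ c₁ hc₁ hco.symm
  have h2 := neg_ds c₁ c₂ hc₂ hco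
  have hrec := saw_reciprocity c₂ c₁ hc₂ hc₁ hco.symm
  push_cast at h1 h2 hrec ⊢
  linear_combination h1 + h2 - hrec

lemma count_eq (c₁ c₂ : ℕ) (hc₁ : 0 < c₁) (hc₂ : 0 < c₂) (hco : Nat.Coprime c₁ c₂)
    (s : ℤ) (hs : 1 - (c₁:ℤ) - (c₂:ℤ) ≤ s) : ((triF c₁ c₂ s).card : ℚ) = Fq c₁ c₂ s := by
  have step : ∀ r : ℤ, 1 - (c₁:ℤ) - (c₂:ℤ) ≤ r →
      ((lineF c₁ c₂ r).card : ℚ) = Fq c₁ c₂ r - Fq c₁ c₂ (r-1) := by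
    intro r hr
    obtain ⟨k₁, hk₁, hd₁⟩ := exists_res c₁ c₂ hc₁ hco r
    obtain ⟨k₂, hk₂, hd₂⟩ := exists_res c₂ c₁ hc₂ hco.symm r
    rw [line_card_q c₁ c₂ hc₁ hc₂ hco r hr k₁ k₂ hk₁ hd₁ hk₂ hd₂,
      Fq_step c₁ c₂ hc₁ hc₂ hco r k₁ k₂ hk₁ hd₁ hk₂ hd₂]
  have base : ((triF c₁ c₂ 0).card : ℚ) = Fq c₁ c₂ 0 := by
    rw [triF_base c₁ c₂ hc₁ hc₂, Fq_base c₁ c₂ hc₁ hc₂ hco]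
    norm_num
  have up : ∀ n : ℕ, ((triF c₁ c₂ (n:ℤ)).card : ℚ) = Fq c₁ c₂ (n:ℤ) := by
    intro n
    induction n with
    | zero => exact_mod_cast base
    | succ n ih =>
      have hrec := triF_succ c₁ c₂ hc₁ hc₂ ((n:ℤ)+1)
      rw [show ((n:ℤ)+1) - 1 = (n:ℤ) by ring] at hrec
      have hstep := step ((n:ℤ)+1) (by
        have : (0:ℤ) ≤ (n:ℤ) := by positivity
        omega)
      have hcast : ((triF c₁ c₂ ((n:ℤ)+1)).card : ℚ)
          = ((triF c₁ c₂ (n:ℤ)).card : ℚ) + ((lineF c₁ c₂ ((n:ℤ)+1)).card : ℚ) := by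
        exact_mod_cast congrArg (fun x : ℕ => (x:ℚ)) hrec
      rw [show ((n+1:ℕ):ℤ) = (n:ℤ)+1 by push_cast; ring]
      rw [hcast, ih, hstep, show ((n:ℤ)+1)-1 = (n:ℤ) by ring]
      ring
  have down : ∀ n : ℕ, ∀ r : ℤ, r = -(n:ℤ) → 1 - (c₁:ℤ) - (c₂:ℤ) ≤ r →
      ((triF c₁ c₂ r).card : ℚ) = Fq c₁ c₂ r := by
    intro n
    induction n with
    | zero =>
      intro r hr _
      have : r = 0 := by omega
      rw [this]
      exact base
    | succ n ih =>
      intro r hr hbnd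
      have hrec := triF_succ c₁ c₂ hc₁ hc₂ (r+1)
      rw [show (r+1) - 1 = r by ring] at hrec
      have hstep := step (r+1) (by omega)
      have ihr := ih (r+1) (by omega) (by omega)
      have hcast : ((triF c₁ c₂ (r+1)).card : ℚ)
          = ((triF c₁ c₂ r).card : ℚ) + ((lineF c₁ c₂ (r+1)).card : ℚ) := by
        exact_mod_cast congrArg (fun x : ℕ => (x:ℚ)) hrec
      rw [ihr, hstep, show (r+1)-1 = r by ring] at hcast
      linarith [hcast]
  rcases le_or_gt 0 s with h|h
  · rw [show s = (s.toNat : ℤ) by omega]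
    exact up s.toNat
  · exact down (-s).toNat s (by omega) hs

/-- **Lattice-point count of the rectangular rational triangle.**
For positive integers `a₁, a₂, c₁, c₂` with `gcd(c₁,c₂) = 1` and integers
`t₁, t₂, t₃` with `c₁t₁/a₁ + c₂t₂/a₂ ≤ t₃` (cleared of denominators), setting
`eⱼ = (⌊(tⱼ−1)/aⱼ⌋+1)·cⱼ`, the number of pairs `(m₁, m₂) ∈ ℤ²` with `a₁m₁ ≥ t₁`,
`a₂m₂ ≥ t₂`, `c₁m₁ + c₂m₂ ≤ t₃` equals
`(e₁+e₂−t₃)²/(2c₁c₂) − (e₁+e₂−t₃)(1/c₁+1/c₂+1/(c₁c₂))/2 + 1/4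
 + (c₁/c₂+c₂/c₁+1/(c₁c₂))/12 + ∑_{k<c₁} (((t₃−e₂−c₂k)/c₁))((k/c₁))
 + ∑_{k<c₂} (((t₃−e₁−c₁k)/c₂))((k/c₂))`. -/
theorem rectangular_triangle_count
    (a₁ a₂ c₁ c₂ : ℕ) (ha₁ : 0 < a₁) (ha₂ : 0 < a₂) (hc₁ : 0 < c₁) (hc₂ : 0 < c₂)
    (hgcd : Nat.Coprime c₁ c₂)
    (t₁ t₂ t₃ : ℤ)
    (hne : (c₁ : ℤ) * t₁ * a₂ + (c₂ : ℤ) * t₂ * a₁ ≤ t₃ * a₁ * a₂)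
    (e₁ e₂ : ℤ)
    (he₁ : e₁ = (⌊((t₁ : ℚ) - 1) / (a₁ : ℚ)⌋ + 1) * c₁)
    (he₂ : e₂ = (⌊((t₂ : ℚ) - 1) / (a₂ : ℚ)⌋ + 1) * c₂) :
    ({p : ℤ × ℤ | t₁ ≤ (a₁ : ℤ) * p.1 ∧ t₂ ≤ (a₂ : ℤ) * p.2 ∧
        (c₁ : ℤ) * p.1 + (c₂ : ℤ) * p.2 ≤ t₃}.ncard : ℚ)
      = ((e₁ : ℚ) + e₂ - t₃) ^ 2 / (2 * c₁ * c₂)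
        - (1 / 2) * ((e₁ : ℚ) + e₂ - t₃) * (1 / c₁ + 1 / c₂ + 1 / ((c₁ : ℚ) * c₂))
        + 1 / 4
        + (1 / 12) * ((c₁ : ℚ) / c₂ + (c₂ : ℚ) / c₁ + 1 / ((c₁ : ℚ) * c₂))
        + ∑ k ∈ Finset.range c₁,
            sawtooth (((t₃ : ℚ) - e₂ - c₂ * k) / (c₁ : ℚ)) * sawtooth ((k : ℚ) / (c₁ : ℚ))
        + ∑ k ∈ Finset.range c₂,
            sawtooth (((t₃ : ℚ) - e₁ - c₁ * k) / (c₂ : ℚ)) * sawtooth ((k : ℚ) / (c₂ : ℚ)) := by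
  set q₁ : ℤ := ⌊((t₁ : ℚ) - 1) / (a₁ : ℚ)⌋ + 1 with hq₁def
  set q₂ : ℤ := ⌊((t₂ : ℚ) - 1) / (a₂ : ℚ)⌋ + 1 with hq₂def
  have ha₁z : (0:ℤ) < a₁ := by exact_mod_cast ha₁
  have ha₂z : (0:ℤ) < a₂ := by exact_mod_cast ha₂
  have hc₁z : (0:ℤ) < c₁ := by exact_mod_cast hc₁
  have hc₂z : (0:ℤ) < c₂ := by exact_mod_cast hc₂
  have hq₁ : q₁ = (t₁ - 1)/(a₁:ℤ) + 1 := by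
    rw [hq₁def, show ((t₁:ℚ) - 1) = ((t₁ - 1 : ℤ):ℚ) by push_cast; ring,
      Rat.floor_intCast_div_natCast]
  have hq₂ : q₂ = (t₂ - 1)/(a₂:ℤ) + 1 := by
    rw [hq₂def, show ((t₂:ℚ) - 1) = ((t₂ - 1 : ℤ):ℚ) by push_cast; ring,
      Rat.floor_intCast_div_natCast]
  have hmono₁ : ∀ m : ℤ, t₁ ≤ (a₁:ℤ)*m ↔ q₁ ≤ m := by
    intro m
    have h := Int.ediv_lt_iff_lt_mul (a := t₁ - 1) (b := m) ha₁z
    rw [hq₁]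
    constructor
    · intro hle
      have : t₁ - 1 < m * a₁ := by rw [mul_comm]; omega
      have := h.2 this
      omega
    · intro hle
      have : (t₁ - 1)/(a₁:ℤ) < m := by omega
      have := h.1 this
      rw [mul_comm] at this
      omega
  have hmono₂ : ∀ m : ℤ, t₂ ≤ (a₂:ℤ)*m ↔ q₂ ≤ m := by
    intro m
    have h := Int.ediv_lt_iff_lt_mul (a := t₂ - 1) (b := m) ha₂z
    rw [hq₂]
    constructor
    · intro hle
      have : t₂ - 1 < m * a₂ := by rw [mul_comm]; omega
      have := h.2 this
      omega
    · intro hle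
      have : (t₂ - 1)/(a₂:ℤ) < m := by omega
      have := h.1 this
      rw [mul_comm] at this
      omega
  set s : ℤ := t₃ - e₁ - e₂ with hsdef
  have hb₁ : (a₁:ℤ)*q₁ ≤ t₁ + a₁ - 1 := by
    rw [hq₁, mul_add, mul_one]
    have hdm := Int.emod_add_mul_ediv (t₁-1) (a₁:ℤ)
    have hr1 : 0 ≤ (t₁-1) % (a₁:ℤ) := Int.emod_nonneg _ (by omega)
    omega
  have hb₂ : (a₂:ℤ)*q₂ ≤ t₂ + a₂ - 1 := by
    rw [hq₂, mul_add, mul_one]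
    have hdm := Int.emod_add_mul_ediv (t₂-1) (a₂:ℤ)
    have hr1 : 0 ≤ (t₂-1) % (a₂:ℤ) := Int.emod_nonneg _ (by omega)
    omega
  have hsbound : 1 - (c₁:ℤ) - (c₂:ℤ) ≤ s := by
    have h1 : (c₁:ℤ)*a₂*((a₁:ℤ)*q₁) ≤ (c₁:ℤ)*a₂*(t₁ + a₁ - 1) :=
      mul_le_mul_of_nonneg_left hb₁ (by positivity)
    have h2 : (c₂:ℤ)*a₁*((a₂:ℤ)*q₂) ≤ (c₂:ℤ)*a₁*(t₂ + a₂ - 1) :=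
      mul_le_mul_of_nonneg_left hb₂ (by positivity)
    have hlt : (a₁:ℤ)*a₂*((c₁:ℤ)*q₁ + (c₂:ℤ)*q₂) < (a₁:ℤ)*a₂*(t₃ + c₁ + c₂) := by
      nlinarith [h1, h2, hne, ha₁z, ha₂z, hc₁z, hc₂z]
    have hq : (c₁:ℤ)*q₁ + (c₂:ℤ)*q₂ < t₃ + c₁ + c₂ :=
      lt_of_mul_lt_mul_left hlt (by positivity)
    have he₁' : e₁ = q₁ * c₁ := he₁
    have he₂' : e₂ = q₂ * c₂ := he₂
    have : (c₁:ℤ)*q₁ = q₁*c₁ := by ring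
    have h2' : (c₂:ℤ)*q₂ = q₂*c₂ := by ring
    omega
  have hinj : Function.Injective (fun n : ℕ × ℕ => (((n.1:ℤ) + q₁, (n.2:ℤ) + q₂) : ℤ × ℤ)) := by
    intro x y hxy
    simp only [Prod.mk.injEq] at hxy
    obtain ⟨hx1, hx2⟩ := hxy
    have e1 : x.1 = y.1 := by omega
    have e2 : x.2 = y.2 := by omega
    exact Prod.ext e1 e2
  have he₁' : e₁ = q₁ * c₁ := he₁
  have he₂' : e₂ = q₂ * c₂ := he₂
  have hset : {p : ℤ × ℤ | t₁ ≤ (a₁ : ℤ) * p.1 ∧ t₂ ≤ (a₂ : ℤ) * p.2 ∧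
        (c₁ : ℤ) * p.1 + (c₂ : ℤ) * p.2 ≤ t₃}
      = (fun n : ℕ × ℕ => (((n.1:ℤ) + q₁, (n.2:ℤ) + q₂) : ℤ × ℤ)) ''
        {n : ℕ × ℕ | (c₁:ℤ)*n.1 + (c₂:ℤ)*n.2 ≤ s} := by
    ext p
    simp only [Set.mem_setOf_eq, Set.mem_image]
    constructor
    · rintro ⟨h1, h2, h3⟩
      have hm1 : q₁ ≤ p.1 := (hmono₁ p.1).1 h1
      have hm2 : q₂ ≤ p.2 := (hmono₂ p.2).1 h2
      refine ⟨((p.1 - q₁).toNat, (p.2 - q₂).toNat), ?_, ?_⟩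
      · simp only [Set.mem_setOf_eq]
        have ht1 : ((p.1 - q₁).toNat : ℤ) = p.1 - q₁ := Int.toNat_of_nonneg (by omega)
        have ht2 : ((p.2 - q₂).toNat : ℤ) = p.2 - q₂ := Int.toNat_of_nonneg (by omega)
        rw [ht1, ht2]
        have hexp : (c₁:ℤ)*(p.1 - q₁) + (c₂:ℤ)*(p.2 - q₂)
            = ((c₁:ℤ)*p.1 + (c₂:ℤ)*p.2) - q₁*c₁ - q₂*c₂ := by ring
        rw [hexp]
        omega
      · have ht1 : ((p.1 - q₁).toNat : ℤ) = p.1 - q₁ := Int.toNat_of_nonneg (by omega)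
        have ht2 : ((p.2 - q₂).toNat : ℤ) = p.2 - q₂ := Int.toNat_of_nonneg (by omega)
        dsimp only
        refine Prod.ext ?_ ?_
        · dsimp only; omega
        · dsimp only; omega
    · rintro ⟨n, hn, rfl⟩
      replace hn : (c₁:ℤ)*n.1 + (c₂:ℤ)*n.2 ≤ s := hn
      dsimp only
      have hn1 : (0:ℤ) ≤ (n.1:ℤ) := by positivity
      have hn2 : (0:ℤ) ≤ (n.2:ℤ) := by positivity
      refine ⟨(hmono₁ _).2 (by omega), (hmono₂ _).2 (by omega), ?_⟩
      have hexp : (c₁:ℤ)*((n.1:ℤ) + q₁) + (c₂:ℤ)*((n.2:ℤ) + q₂)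
          = ((c₁:ℤ)*n.1 + (c₂:ℤ)*n.2) + q₁*c₁ + q₂*c₂ := by ring
      rw [hexp]
      omega
  have hset2 : {n : ℕ × ℕ | (c₁:ℤ)*n.1 + (c₂:ℤ)*n.2 ≤ s} = ↑(triF c₁ c₂ s) := by
    ext n
    simp only [Set.mem_setOf_eq, triF, Finset.coe_filter, mem_product, mem_range]
    have hh1 : (n.1:ℤ) ≤ (c₁:ℤ)*n.1 := le_mul_of_one_le_left (by positivity) (by exact_mod_cast hc₁)
    have hh2 : (n.2:ℤ) ≤ (c₂:ℤ)*n.2 := le_mul_of_one_le_left (by positivity) (by exact_mod_cast hc₂)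
    have hh3 : 0 ≤ (c₁:ℤ)*n.1 := by positivity
    have hh4 : 0 ≤ (c₂:ℤ)*n.2 := by positivity
    constructor
    · intro hle
      exact ⟨⟨by omega, by omega⟩, hle⟩
    · rintro ⟨-, hle⟩
      exact hle
  rw [hset, Set.ncard_image_of_injective _ hinj, hset2, Set.ncard_coe_finset,
    count_eq c₁ c₂ hc₁ hc₂ hgcd s hsbound]
  have hsum1 : ∑ k ∈ range c₁, sawtooth (((s:ℚ) - (c₂:ℚ)*k)/(c₁:ℚ)) * sawtooth ((k:ℚ)/(c₁:ℚ))
      = ∑ k ∈ Finset.range c₁,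
          sawtooth (((t₃ : ℚ) - e₂ - c₂ * k) / (c₁ : ℚ)) * sawtooth ((k : ℚ) / (c₁ : ℚ)) := by
    refine Finset.sum_congr rfl (fun k hk => ?_)
    have harg : ((t₃ : ℚ) - e₂ - c₂ * k) / (c₁ : ℚ)
        = ((s:ℚ) - (c₂:ℚ)*k)/(c₁:ℚ) + ((q₁:ℤ):ℚ) := by
      have hsq : (s:ℚ) = (t₃:ℚ) - (e₁:ℚ) - (e₂:ℚ) := by
        rw [hsdef]; push_cast; ring
      have he₁q : (e₁:ℚ) = (q₁:ℚ)*(c₁:ℚ) := by exact_mod_cast he₁'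
      rw [hsq, he₁q]
      have hc₁q : (c₁:ℚ) ≠ 0 := by positivity
      field_simp
      ring
    rw [harg, saw_add_int]
  have hsum2 : ∑ k ∈ range c₂, sawtooth (((s:ℚ) - (c₁:ℚ)*k)/(c₂:ℚ)) * sawtooth ((k:ℚ)/(c₂:ℚ))
      = ∑ k ∈ Finset.range c₂,
          sawtooth (((t₃ : ℚ) - e₁ - c₁ * k) / (c₂ : ℚ)) * sawtooth ((k : ℚ) / (c₂ : ℚ)) := by
    refine Finset.sum_congr rfl (fun k hk => ?_)
    have harg : ((t₃ : ℚ) - e₁ - c₁ * k) / (c₂ : ℚ)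
        = ((s:ℚ) - (c₁:ℚ)*k)/(c₂:ℚ) + ((q₂:ℤ):ℚ) := by
      have hsq : (s:ℚ) = (t₃:ℚ) - (e₁:ℚ) - (e₂:ℚ) := by
        rw [hsdef]; push_cast; ring
      have he₂q : (e₂:ℚ) = (q₂:ℚ)*(c₂:ℚ) := by exact_mod_cast he₂'
      rw [hsq, he₂q]
      have hc₂q : (c₂:ℚ) ≠ 0 := by positivity
      field_simp
      ring
    rw [harg, saw_add_int]
  unfold Fq
  rw [hsum1, hsum2]
  have hsq : (s:ℚ) = -((e₁:ℚ) + (e₂:ℚ) - (t₃:ℚ)) := by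
    rw [hsdef]; push_cast; ring
  rw [hsq]
  ring
end

section
/- Fourier expansion of a Dedekind–Rademacher-type sum: Let c_1, c_2 be positive integers with gcd(c_1, c_2) = 1, and let t be an integer. Then (1/c_1) · Σ_λ λ^t / ((1 − λ^{c_2})(1 − λ)), where the sum runs over all complex c_1-th roots of unity λ ≠ 1, equals Σ_{k=0}^{c_1 − 1} (((−c_2 k − t)/c_1)) · ((k/c_1)) − 1/(4 c_1), where ((x)) = x − ⌊x⌋ − 1/2 denotes the sawtooth function (in particular, the left-hand side is a rational real number). -/
open Finset Polynomial

theorem dvd_add_iff_eq_neg_emod {n a k : ℤ} (hk₀ : 0 ≤ k) (hkn : k < n) :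
    n ∣ a + k ↔ k = -a % n := by
  rw [add_comm, ← sub_neg_eq_add, ← Int.modEq_iff_dvd, Int.ModEq, Int.emod_eq_of_lt hk₀ hkn,
    eq_comm]

theorem sum_range_emod_mul_add {M : Type*} [AddCommMonoid M] {n : ℕ} {a : ℤ}
    (ha : IsCoprime (n : ℤ) a) (b : ℤ) (f : ℤ → M) :
    ∑ k ∈ range n, f ((a * k + b) % n) = ∑ k ∈ range n, f k := by
  rcases Nat.eq_zero_or_pos n with rfl | hn
  · simp
  have hn' : (0 : ℤ) < n := by exact_mod_cast hn
  set φ : ℕ → ℕ := fun k ↦ ((a * k + b) % n).toNat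
  have hφ (k : ℕ) : (φ k : ℤ) = (a * k + b) % n :=
    Int.toNat_of_nonneg (Int.emod_nonneg _ hn'.ne')
  have maps : ∀ k ∈ range n, φ k ∈ range n := fun k _ ↦ by
    have := Int.emod_lt_of_pos (a * k + b) hn'
    have := hφ k
    rw [mem_range]; omega
  have inj : Set.InjOn φ (range n) := by
    intro k hk k' hk' h
    simp only [coe_range, Set.mem_Iio] at hk hk'
    have hmod : a * k + b ≡ a * k' + b [ZMOD n] := by
      rw [Int.ModEq, ← hφ, ← hφ, h]
    have hdvd : (n : ℤ) ∣ a * (k' - k) := by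
      rw [mul_sub]; exact Int.ModEq.dvd (Int.ModEq.add_right_cancel' b hmod)
    have := (dvd_add_iff_eq_neg_emod (n := n) (a := -(k : ℤ)) (k := k') (by positivity)
      (by exact_mod_cast hk')).1 (by rw [neg_add_eq_sub]; exact ha.dvd_of_dvd_mul_left hdvd)
    rw [neg_neg, Int.emod_eq_of_lt (by positivity) (by exact_mod_cast hk)] at this
    exact_mod_cast this.symm
  refine sum_nbij φ maps inj (surjOn_of_injOn_of_card_le φ maps inj le_rfl) fun k _ ↦ ?_
  rw [hφ]

theorem sum_range_ite_dvd_add {R : Type*} [AddCommGroupWithOne R] {n : ℕ} (hn : 0 < n) (a : ℤ) :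
    ∑ k ∈ range n, (if (n : ℤ) ∣ a + k then (k : R) else 0) = ((-a % n : ℤ) : R) := by
  have hn' : (0 : ℤ) < n := by exact_mod_cast hn
  have hr : (((-a % n).toNat : ℕ) : ℤ) = -a % n :=
    Int.toNat_of_nonneg (Int.emod_nonneg _ hn'.ne')
  have hdvd {k : ℕ} (hk : k ∈ range n) : (n : ℤ) ∣ a + k ↔ k = (-a % n).toNat := by
    rw [dvd_add_iff_eq_neg_emod (by positivity) (by exact_mod_cast mem_range.1 hk), ← hr]
    exact_mod_cast Iff.rfl
  have hmem : (-a % n).toNat ∈ range n := by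
    have := Int.emod_lt_of_pos (-a) hn'
    rw [mem_range]; omega
  rw [sum_eq_single_of_mem _ hmem fun k hk hne ↦ if_neg ((hdvd hk).not.2 hne),
    if_pos ((hdvd hmem).2 rfl)]
  exact_mod_cast congrArg (Int.cast (R := R)) hr

theorem sum_range_natCast_eq_div {K : Type*} [Field K] [CharZero K] (n : ℕ) :
    ∑ k ∈ range n, (k : K) = n * (n - 1) / 2 := by
  induction n with
  | zero => simp
  | succ n ih => rw [sum_range_succ, ih]; push_cast; ring

theorem sawtooth_intCast_div_natCast (a : ℤ) (n : ℕ) :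
    sawtooth (a / n) = ((a % n : ℤ) : ℚ) / n - 1 / 2 := by
  rw [sawtooth, Rat.floor_intCast_div_natCast, Int.emod_def]
  rcases Nat.eq_zero_or_pos n with rfl | hn
  · simp
  push_cast
  field_simp

theorem one_sub_mul_sum_range_natCast_mul_pow {R : Type*} [CommRing R] (z : R) (n : ℕ) :
    (1 - z) * ∑ k ∈ range n, (k : R) * z ^ k = ∑ k ∈ range n, z ^ (k + 1) - n * z ^ n := by
  induction n with
  | zero => simp
  | succ n ih =>
    rw [sum_range_succ, mul_add, ih, sum_range_succ]
    push_cast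
    ring

theorem inv_one_sub_eq_of_pow_eq_one {K : Type*} [Field K] {n : ℕ} (hn : (n : K) ≠ 0) {z : K}
    (hz : z ^ n = 1) (hz1 : z ≠ 1) :
    (1 - z)⁻¹ = -(n : K)⁻¹ * ∑ k ∈ range n, (k : K) * z ^ k := by
  have hgeom : ∑ k ∈ range n, z ^ k = 0 := by
    have := geom_sum_mul z n
    rw [hz, sub_self] at this
    exact (mul_eq_zero.1 this).resolve_right (sub_ne_zero.2 hz1)
  have key := one_sub_mul_sum_range_natCast_mul_pow z n
  simp only [pow_succ', ← mul_sum, hgeom, mul_zero, hz, zero_sub, mul_one] at key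
  refine (eq_inv_of_mul_eq_one_left ?_).symm
  rw [mul_assoc, mul_comm _ (1 - z), key, neg_mul_neg, inv_mul_cancel₀ hn]

section RootsOfUnity

variable {K : Type*} [Field K] {n : ℕ}

theorem IsPrimitiveRoot.sum_nthRootsFinset_zpow {ζ : K} (hζ : IsPrimitiveRoot ζ n) (m : ℤ) :
    ∑ z ∈ nthRootsFinset n (1 : K), z ^ m = if (n : ℤ) ∣ m then (n : K) else 0 := by
  classical
  have himage : nthRootsFinset n (1 : K) = (range n).image (ζ ^ ·) := by
    rw [nthRootsFinset_def, hζ.nthRoots_eq (one_pow n)]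
    ext; simp
  have hcomm (i : ℕ) : (ζ ^ i) ^ m = (ζ ^ m) ^ i := by
    rw [← zpow_natCast, ← zpow_natCast, ← zpow_mul, ← zpow_mul, mul_comm]
  rw [himage, sum_image fun i hi j hj h ↦ hζ.injOn_pow (by simpa using hi) (by simpa using hj) h]
  simp only [hcomm]
  split_ifs with hdvd
  · simp [(hζ.zpow_eq_one_iff_dvd m).2 hdvd]
  · have hpow : (ζ ^ m) ^ n = 1 := by
      rw [← hcomm, hζ.pow_eq_one, one_zpow]
    rw [geom_sum_eq (mt (hζ.zpow_eq_one_iff_dvd m).1 hdvd), hpow, sub_self, zero_div]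

theorem IsPrimitiveRoot.sum_nthRootsFinset_erase_one_zpow [DecidableEq K] {ζ : K}
    (hζ : IsPrimitiveRoot ζ n) (hn : 0 < n) (m : ℤ) :
    ∑ z ∈ (nthRootsFinset n (1 : K)).erase 1, z ^ m
      = (if (n : ℤ) ∣ m then (n : K) else 0) - 1 := by
  rw [sum_erase_eq_sub (one_mem_nthRootsFinset hn), hζ.sum_nthRootsFinset_zpow, one_zpow]

theorem zpow_div_one_sub_pow_mul_one_sub_eq (hn : (n : K) ≠ 0) {c : ℕ} (hnc : n.Coprime c)
    {z : K} (hz : z ^ n = 1) (hz1 : z ≠ 1) (t : ℤ) :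
    z ^ t / ((1 - z ^ c) * (1 - z))
      = (n : K)⁻¹ ^ 2 *
          ∑ j ∈ range n, ∑ k ∈ range n, (j * k : K) * z ^ (t + c * j + k) := by
  have hz0 : z ≠ 0 := by
    rintro rfl
    exact zero_ne_one ((zero_pow (by rintro rfl; simp at hn)).symm.trans hz)
  have hzc : z ^ c ≠ 1 := fun h ↦ hz1 ((pow_eq_one_iff_of_coprime hnc).1 ⟨hz, h⟩)
  have hzcn : (z ^ c) ^ n = 1 := by rw [← pow_mul, mul_comm, pow_mul, hz, one_pow]
  have hterm (j k : ℕ) :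
      (j * k : K) * z ^ (t + c * j + k) = z ^ t * ((j * (z ^ c) ^ j) * (k * z ^ k)) := by
    rw [zpow_add₀ hz0, zpow_add₀ hz0, zpow_mul, zpow_natCast, zpow_natCast, zpow_natCast]
    ring
  have hexpand : ∑ j ∈ range n, ∑ k ∈ range n, (j * k : K) * z ^ (t + c * j + k)
      = z ^ t * ((∑ j ∈ range n, j * (z ^ c) ^ j) * ∑ k ∈ range n, k * z ^ k) := by
    rw [sum_mul_sum, mul_sum]
    simp only [hterm, mul_sum]
  rw [hexpand, div_eq_mul_inv, mul_inv, inv_one_sub_eq_of_pow_eq_one hn hzcn hzc,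
    inv_one_sub_eq_of_pow_eq_one hn hz hz1]
  ring

end RootsOfUnity

def residueMoment (n c : ℕ) (t : ℤ) : ℤ := ∑ k ∈ range n, k * ((-c * k - t) % n)

theorem IsPrimitiveRoot.one_div_mul_sum_erase_one_zpow_div_eq {K : Type*} [Field K] [CharZero K]
    [DecidableEq K] {n : ℕ} {ζ : K} (hζ : IsPrimitiveRoot ζ n) (hn : 0 < n) {c : ℕ}
    (hnc : n.Coprime c) (t : ℤ) :
    1 / (n : K) * ∑ z ∈ (nthRootsFinset n (1 : K)).erase 1, z ^ t / ((1 - z ^ c) * (1 - z))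
      = residueMoment n c t / n ^ 2 - (n - 1) ^ 2 / (4 * n) := by
  have hn0 : (n : K) ≠ 0 := Nat.cast_ne_zero.2 hn.ne'
  have hinner (j : ℕ) :
      ∑ k ∈ range n, (j * k : K) * ((if (n : ℤ) ∣ t + c * j + k then (n : K) else 0) - 1)
        = n * (j * ((-c * j - t) % n : ℤ)) - j * ∑ k ∈ range n, (k : K) := by
    have hterm (k : ℕ) :
        (j * k : K) * ((if (n : ℤ) ∣ t + c * j + k then (n : K) else 0) - 1)
          = n * j * (if (n : ℤ) ∣ t + c * j + k then (k : K) else 0) - j * k := by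
      split_ifs <;> ring
    rw [sum_congr rfl fun k _ ↦ hterm k, sum_sub_distrib, ← mul_sum, ← mul_sum,
      sum_range_ite_dvd_add hn, show -(t + c * j) = -c * j - t by ring]
    ring
  calc 1 / (n : K) * ∑ z ∈ (nthRootsFinset n (1 : K)).erase 1, z ^ t / ((1 - z ^ c) * (1 - z))
      = (n : K)⁻¹ ^ 3 * ∑ j ∈ range n, ∑ k ∈ range n, (j * k : K) *
          ∑ z ∈ (nthRootsFinset n (1 : K)).erase 1, z ^ (t + c * j + k) := by
        rw [sum_congr rfl fun z hz ↦ zpow_div_one_sub_pow_mul_one_sub_eq hn0 hnc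
          ((Polynomial.mem_nthRootsFinset hn 1).1 (mem_of_mem_erase hz)) (ne_of_mem_erase hz) t]
        simp only [← mul_sum, sum_comm (s := (nthRootsFinset n (1 : K)).erase 1)]
        ring
    _ = (n : K)⁻¹ ^ 3 * (n * residueMoment n c t - (∑ k ∈ range n, (k : K)) ^ 2) := by
        simp only [hζ.sum_nthRootsFinset_erase_one_zpow hn, hinner, sum_sub_distrib, ← mul_sum,
          ← sum_mul, residueMoment]
        push_cast
        ring
    _ = residueMoment n c t / n ^ 2 - (n - 1) ^ 2 / (4 * n) := by
        rw [sum_range_natCast_eq_div]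
        field_simp
        ring

theorem sum_sawtooth_mul_sawtooth_sub_eq {n c : ℕ} (hn : 0 < n) (hnc : n.Coprime c) (t : ℤ) :
    ∑ k ∈ range n, sawtooth ((-(c : ℚ) * k - t) / n) * sawtooth (k / n) - 1 / (4 * n)
      = residueMoment n c t / n ^ 2 - (n - 1) ^ 2 / (4 * n) := by
  have hn0 : (n : ℚ) ≠ 0 := Nat.cast_ne_zero.2 hn.ne'
  have hsaw (k : ℕ) (hk : k ∈ range n) :
      sawtooth ((-(c : ℚ) * k - t) / n) * sawtooth (k / n)
        = ((k * ((-c * k - t) % n) : ℤ) : ℚ) / n ^ 2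
          - ((((-c * k - t) % n : ℤ) : ℚ) + k) / (2 * n) + 1 / 4 := by
    have hr := sawtooth_intCast_div_natCast (-c * k - t) n
    have hk' := sawtooth_intCast_div_natCast k n
    rw [Int.emod_eq_of_lt (by positivity) (by exact_mod_cast mem_range.1 hk)] at hk'
    push_cast at hr hk' ⊢
    rw [hr, hk']
    field_simp
    ring
  have hperm :
      ∑ k ∈ range n, (((-c * k - t) % n : ℤ) : ℚ) = ∑ k ∈ range n, (k : ℚ) := by
    simpa only [sub_eq_add_neg, Int.cast_natCast] using sum_range_emod_mul_add
      (Nat.isCoprime_iff_coprime.2 hnc).neg_right (-t) (Int.cast : ℤ → ℚ)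
  rw [sum_congr rfl hsaw, sum_add_distrib, sum_sub_distrib, ← sum_div, ← sum_div,
    sum_add_distrib, hperm, sum_range_natCast_eq_div, ← Int.cast_sum, ← residueMoment,
    sum_const, card_range, nsmul_eq_mul]
  field_simp
  ring

theorem fourier_dedekind_sum_formula_general
    (c₁ c₂ : ℕ) (hc₁ : 0 < c₁) (hgcd : Nat.Coprime c₁ c₂) (t : ℤ) :
    (1 / (c₁ : ℂ)) *
        ∑ z ∈ (Polynomial.nthRootsFinset c₁ (1 : ℂ)).erase 1,
          z ^ t / ((1 - z ^ c₂) * (1 - z))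
      = ((∑ k ∈ Finset.range c₁,
            sawtooth ((-(c₂ : ℚ) * k - t) / (c₁ : ℚ)) * sawtooth ((k : ℚ) / (c₁ : ℚ))
          - 1 / (4 * c₁) : ℚ) : ℂ) := by
  rw [(Complex.isPrimitiveRoot_exp c₁ hc₁.ne').one_div_mul_sum_erase_one_zpow_div_eq hc₁ hgcd,
    sum_sawtooth_mul_sawtooth_sub_eq hc₁ hgcd]
  push_cast
  rfl

/-- **Fourier expansion of a Dedekind–Rademacher-type sum.**
For coprime positive integers `c₁, c₂` and an integer `t`,
`(1/c₁) ∑_{λ^{c₁}=1, λ≠1} λ^t / ((1−λ^{c₂})(1−λ))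
  = ∑_{k=0}^{c₁−1} (((−c₂k−t)/c₁)) ((k/c₁)) − 1/(4c₁)`,
where the sum on the left runs over the nontrivial complex `c₁`-th roots of unity;
in particular the left-hand side is a rational real number. -/
theorem fourier_dedekind_sum_formula
    (c₁ c₂ : ℕ) (hc₁ : 0 < c₁) (hc₂ : 0 < c₂) (hgcd : Nat.Coprime c₁ c₂) (t : ℤ) :
    (1 / (c₁ : ℂ)) *
        ∑ z ∈ (Polynomial.nthRootsFinset c₁ (1 : ℂ)).erase 1,
          z ^ t / ((1 - z ^ c₂) * (1 - z))
      = ((∑ k ∈ Finset.range c₁,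
            sawtooth ((-(c₂ : ℚ) * k - t) / (c₁ : ℚ)) * sawtooth ((k : ℚ) / (c₁ : ℚ))
          - 1 / (4 * c₁) : ℚ) : ℂ) :=
  fourier_dedekind_sum_formula_general c₁ c₂ hc₁ hgcd t
end
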